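/- arXiv:2605.24156 — 7 statements merged into one kernel-verified Lean document; each statement's English description precedes it below -/
import Mathlib

section
/- Let n ≥ q ≥ 1, let θ ∈ [−π, π] with θ ≠ 0, let 0 < s⁻ ≤ s⁺, let G be an n×q complex matrix satisfying s⁻·I_q ⪯ (1/n)·G*G ⪯ s⁺·I_q, let d₁, …, d_q ∈ [0, 1/2), and set D̄(θ) = diag(|1 − e^{−iθ}|^{−d₁}, …, |1 − e^{−iθ}|^{−d_q}) and Σ_χ(θ) = G·D̄(θ)²·G*. Then for each r = 1, …, q one has n·s⁻·μ_r(θ) ≤ λ_r(Σ_χ(θ)) ≤ n·s⁺·μ_r(θ), where μ_r(θ) denotes the r-th largest element of the list (|1 − e^{−iθ}|^{−2d₁}, …, |1 − e^{−iθ}|^{−2d_q}); moreover λ_r(Σ_χ(θ)) = 0 for r = q+1, …, n. -/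
open Matrix
open scoped Real Matrix.Norms.L2Operator ComplexOrder

/-- The `r`-th largest value (1-indexed, counted with multiplicity) of a finite family of reals. -/
noncomputable def nthLargest {m : ℕ} (f : Fin m → ℝ) (r : ℕ) : ℝ :=
  (((Finset.univ.val.map f).sort (· ≤ ·)).reverse).getD (r - 1) 0

/-- The `r`-th largest eigenvalue (1-indexed, counted with multiplicity) of a Hermitian matrix
(junk value `0` if the matrix is not Hermitian). -/
noncomputable def eigsDesc {n : ℕ} (A : Matrix (Fin n) (Fin n) ℂ) (r : ℕ) : ℝ :=
  if h : A.IsHermitian then nthLargest h.eigenvalues r else 0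

/-!
Write `C = G D̄`, so that `Σ_χ = C C*`. The characteristic polynomials of `C C*` and
`C* C = D̄ (G* G) D̄` differ by the factor `X^(n-q)`, so the spectrum of `Σ_χ` is that of the
positive semidefinite `C* C` padded with `n - q` zeros. Conjugating `s⁻ I ⪯ G* G / n ⪯ s⁺ I` by `D̄`
gives `n s⁻ D̄² ⪯ C* C ⪯ n s⁺ D̄²`, and Weyl's monotonicity theorem (sorted eigenvalues are monotone
in the Loewner order, by a Courant–Fischer dimension count) compares the `r`-th eigenvalue of
`C* C` with the `r`-th largest diagonal entry of `D̄²`.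
-/

open Module Polynomial

noncomputable def nthLargestOf (s : Multiset ℝ) (r : ℕ) : ℝ :=
  (s.sort (· ≥ ·)).getD (r - 1) 0

lemma Multiset.sort_ge_eq_of_sortedGE {s : Multiset ℝ} {l : List ℝ} (hl : l.SortedGE)
    (hs : (l : Multiset ℝ) = s) : s.sort (· ≥ ·) = l :=
  List.Perm.eq_of_sortedGE (List.sortedGE_iff_pairwise.mpr (s.pairwise_sort _)) hl
    (Multiset.coe_eq_coe.mp ((s.sort_eq _).trans hs.symm))

lemma Multiset.reverse_sort_le (s : Multiset ℝ) :
    (s.sort (· ≤ ·)).reverse = s.sort (· ≥ ·) := by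
  have h := (s.sort_eq (· ≤ ·)).trans (s.sort_eq (· ≥ ·)).symm
  rw [← List.reverse_reverse (s.sort (· ≥ ·)), List.reverse_inj]
  exact (Multiset.coe_eq_coe.mp h).eq_reverse_of_sortedLE_of_sortedGE
    (List.sortedLE_iff_pairwise.mpr (s.pairwise_sort _))
    (List.sortedGE_iff_pairwise.mpr (s.pairwise_sort _))

lemma nthLargest_eq_nthLargestOf {m : ℕ} (f : Fin m → ℝ) (r : ℕ) :
    nthLargest f r = nthLargestOf (Finset.univ.val.map f) r := by
  rw [nthLargest, nthLargestOf, Multiset.reverse_sort_le]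

lemma nthLargestOf_of_card_lt {s : Multiset ℝ} {r : ℕ} (hr : s.card < r) :
    nthLargestOf s r = 0 :=
  List.getD_eq_default _ _ (by rw [Multiset.length_sort]; omega)

lemma nthLargestOf_map {g : ℝ → ℝ} (hg : Monotone g) (hg0 : g 0 = 0) (s : Multiset ℝ) (r : ℕ) :
    nthLargestOf (s.map g) r = g (nthLargestOf s r) := by
  have hsort : (s.map g).sort (· ≥ ·) = (s.sort (· ≥ ·)).map g := by
    refine Multiset.sort_ge_eq_of_sortedGE ?_ (by rw [← Multiset.map_coe, Multiset.sort_eq])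
    exact List.sortedGE_iff_pairwise.mpr ((s.pairwise_sort _).map g fun _ _ h => hg h)
  rw [nthLargestOf, nthLargestOf, hsort, ← hg0, List.getD_map, hg0]

lemma nthLargestOf_replicate_zero_add (k : ℕ) {s : Multiset ℝ} (hs : ∀ x ∈ s, 0 ≤ x) (r : ℕ) :
    nthLargestOf (Multiset.replicate k 0 + s) r = nthLargestOf s r := by
  have hsort : (Multiset.replicate k 0 + s).sort (· ≥ ·) =
      s.sort (· ≥ ·) ++ List.replicate k 0 := by
    refine Multiset.sort_ge_eq_of_sortedGE ?_ ?_
    · refine List.sortedGE_iff_pairwise.mpr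
        (List.pairwise_append.mpr ⟨s.pairwise_sort _, ?_, ?_⟩)
      · exact List.pairwise_replicate.mpr (Or.inr le_rfl)
      · intro a ha b hb
        rw [List.eq_of_mem_replicate hb]
        exact hs a ((Multiset.mem_sort _).mp ha)
    · rw [← Multiset.coe_add, Multiset.sort_eq, Multiset.coe_replicate, add_comm]
  rw [nthLargestOf, nthLargestOf, hsort]
  rcases lt_or_ge (r - 1) (s.sort (· ≥ ·)).length with h | h
  · exact List.getD_append _ _ _ _ h
  · rw [List.getD_append_right _ _ _ _ h, List.getD_eq_default _ _ h]
    rcases lt_or_ge (r - 1 - (s.sort (· ≥ ·)).length) k with hk | hk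
    · exact List.getD_replicate _ hk
    · exact List.getD_eq_default _ _ (by rwa [List.length_replicate])

lemma nthLargest_const_mul {m : ℕ} (f : Fin m → ℝ) {a : ℝ} (ha : 0 ≤ a) (r : ℕ) :
    nthLargest (fun i => a * f i) r = a * nthLargest f r := by
  rw [nthLargest_eq_nthLargestOf, nthLargest_eq_nthLargestOf,
    ← nthLargestOf_map (monotone_mul_left_of_nonneg ha) (mul_zero a), Multiset.map_map]
  rfl

lemma nthLargest_of_lt {m : ℕ} (f : Fin m → ℝ) {r : ℕ} (hr : m < r) : nthLargest f r = 0 := by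
  rw [nthLargest_eq_nthLargestOf]
  exact nthLargestOf_of_card_lt (by simpa using hr)

namespace Orthonormal
variable {𝕜 E ι : Type*} [RCLike 𝕜] [NormedAddCommGroup E] [InnerProductSpace 𝕜 E] [Fintype ι]
  {v : ι → E} (hv : Orthonormal 𝕜 v)
include hv

lemma norm_sum_smul_sq (c : ι → 𝕜) : ‖∑ i, c i • v i‖ ^ 2 = ∑ i, ‖c i‖ ^ 2 := by
  rw [← RCLike.ofReal_inj (K := 𝕜), RCLike.ofReal_pow, ← inner_self_eq_norm_sq_to_K,
    hv.inner_sum, RCLike.ofReal_sum]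
  simp [RCLike.conj_mul]

variable {T : E →ₗ[𝕜] E} {ev : ι → ℝ} (hT : ∀ i, T (v i) = (ev i : 𝕜) • v i)
include hT

lemma re_inner_map_sum_smul (c : ι → 𝕜) :
    RCLike.re (inner 𝕜 (T (∑ i, c i • v i)) (∑ i, c i • v i)) = ∑ i, ev i * ‖c i‖ ^ 2 := by
  have hTsum : T (∑ i, c i • v i) = ∑ i, (ev i * c i) • v i := by
    simp [map_sum, hT, smul_smul, mul_comm]
  rw [hTsum, hv.inner_sum, map_sum]
  refine Finset.sum_congr rfl fun i _ => ?_
  rw [map_mul (starRingEnd 𝕜), RCLike.conj_ofReal, mul_assoc, RCLike.conj_mul,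
    ← RCLike.ofReal_pow, ← RCLike.ofReal_mul, RCLike.ofReal_re]

lemma mul_norm_sq_le_re_inner_of_mem_span {t : ℝ} (ht : ∀ i, t ≤ ev i) {x : E}
    (hx : x ∈ Submodule.span 𝕜 (Set.range v)) :
    t * ‖x‖ ^ 2 ≤ RCLike.re (inner 𝕜 (T x) x) := by
  obtain ⟨c, rfl⟩ := (Submodule.mem_span_range_iff_exists_fun 𝕜).mp hx
  rw [hv.re_inner_map_sum_smul hT, hv.norm_sum_smul_sq, Finset.mul_sum]
  exact Finset.sum_le_sum fun i _ => mul_le_mul_of_nonneg_right (ht i) (sq_nonneg _)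

lemma re_inner_le_mul_norm_sq_of_mem_span {t : ℝ} (ht : ∀ i, ev i ≤ t) {x : E}
    (hx : x ∈ Submodule.span 𝕜 (Set.range v)) :
    RCLike.re (inner 𝕜 (T x) x) ≤ t * ‖x‖ ^ 2 := by
  obtain ⟨c, rfl⟩ := (Submodule.mem_span_range_iff_exists_fun 𝕜).mp hx
  rw [hv.re_inner_map_sum_smul hT, hv.norm_sum_smul_sq, Finset.mul_sum]
  exact Finset.sum_le_sum fun i _ => mul_le_mul_of_nonneg_right (ht i) (sq_nonneg _)

end Orthonormal

lemma Submodule.inf_ne_bot_of_finrank_lt_add {K V : Type*} [DivisionRing K] [AddCommGroup V]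
    [Module K V] [FiniteDimensional K V] {U W : Submodule K V}
    (h : finrank K V < finrank K U + finrank K W) : U ⊓ W ≠ ⊥ := by
  intro hUW
  have := Submodule.finrank_sup_add_finrank_inf_eq U W
  rw [hUW, finrank_bot] at this
  have := Submodule.finrank_le (U ⊔ W)
  omega

namespace LinearMap.IsSymmetric
variable {𝕜 E : Type*} [RCLike 𝕜] [NormedAddCommGroup E] [InnerProductSpace 𝕜 E]
  [FiniteDimensional 𝕜 E] {T S : E →ₗ[𝕜] E} {n : ℕ}

lemma orthonormal_eigenvectorBasis_subtype (hT : T.IsSymmetric) (hn : finrank 𝕜 E = n)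
    (s : Finset (Fin n)) : Orthonormal 𝕜 fun j : s => hT.eigenvectorBasis hn j :=
  (hT.eigenvectorBasis hn).orthonormal.comp _ Subtype.val_injective

lemma finrank_span_eigenvectorBasis (hT : T.IsSymmetric) (hn : finrank 𝕜 E = n)
    (s : Finset (Fin n)) :
    finrank 𝕜 (Submodule.span 𝕜 (Set.range fun j : s => hT.eigenvectorBasis hn j)) = s.card :=
  (finrank_span_eq_card (hT.orthonormal_eigenvectorBasis_subtype hn s).linearIndependent).trans
    (Fintype.card_coe s)

theorem eigenvalues_le_of_le (hT : T.IsSymmetric) (hS : S.IsSymmetric) (hTS : T ≤ S)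
    (hn : finrank 𝕜 E = n) (i : Fin n) : hT.eigenvalues hn i ≤ hS.eigenvalues hn i := by
  set U := Submodule.span 𝕜 (Set.range fun j : Finset.Iic i => hT.eigenvectorBasis hn j)
  set W := Submodule.span 𝕜 (Set.range fun j : Finset.Ici i => hS.eigenvectorBasis hn j)
  have hUW : U ⊓ W ≠ ⊥ := by
    refine Submodule.inf_ne_bot_of_finrank_lt_add ?_
    rw [hT.finrank_span_eigenvectorBasis, hS.finrank_span_eigenvectorBasis, Fin.card_Iic,
      Fin.card_Ici]
    omega
  obtain ⟨x, hx, hx0⟩ := Submodule.exists_mem_ne_zero_of_ne_bot hUW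
  have hTx : hT.eigenvalues hn i * ‖x‖ ^ 2 ≤ RCLike.re (inner 𝕜 (T x) x) :=
    (hT.orthonormal_eigenvectorBasis_subtype hn _).mul_norm_sq_le_re_inner_of_mem_span
      (fun j => hT.apply_eigenvectorBasis hn j)
      (fun j => hT.eigenvalues_antitone hn (Finset.mem_Iic.mp j.2)) (Submodule.mem_inf.mp hx).1
  have hSx : RCLike.re (inner 𝕜 (S x) x) ≤ hS.eigenvalues hn i * ‖x‖ ^ 2 :=
    (hS.orthonormal_eigenvectorBasis_subtype hn _).re_inner_le_mul_norm_sq_of_mem_span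
      (fun j => hS.apply_eigenvectorBasis hn j)
      (fun j => hS.eigenvalues_antitone hn (Finset.mem_Ici.mp j.2)) (Submodule.mem_inf.mp hx).2
  have hTSx : RCLike.re (inner 𝕜 (T x) x) ≤ RCLike.re (inner 𝕜 (S x) x) := by
    have := hTS.re_inner_nonneg_left x
    rwa [sub_apply, inner_sub_left, map_sub, sub_nonneg] at this
  exact le_of_mul_le_mul_right (hTx.trans (hTSx.trans hSx)) (by positivity)

end LinearMap.IsSymmetric

lemma Matrix.roots_charpoly_mul_comm_of_le {K m n : Type*} [Field K] [Fintype m] [Fintype n]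
    [DecidableEq m] [DecidableEq n] (A : Matrix m n K) (B : Matrix n m K)
    (h : Fintype.card n ≤ Fintype.card m) :
    (A * B).charpoly.roots =
      Multiset.replicate (Fintype.card m - Fintype.card n) 0 + (B * A).charpoly.roots := by
  rw [charpoly_mul_comm_of_le A B h,
    roots_mul ((monic_X_pow _).mul (charpoly_monic _)).ne_zero, roots_X_pow,
    Multiset.nsmul_singleton]

lemma Matrix.isHermitian_diagonal_ofReal {𝕜 ι : Type*} [RCLike 𝕜] [DecidableEq ι]
    (f : ι → ℝ) : (diagonal fun i => (f i : 𝕜)).IsHermitian :=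
  isHermitian_diagonal_iff.mpr fun i => RCLike.conj_ofReal (f i)

lemma Matrix.smul_diagonal_ofReal {𝕜 ι : Type*} [RCLike 𝕜] [DecidableEq ι] (a : ℝ)
    (f : ι → ℝ) : a • (diagonal fun i => (f i : 𝕜)) = diagonal fun i => ((a * f i : ℝ) : 𝕜) := by
  rw [← diagonal_smul]
  congr 1
  funext i
  simp [RCLike.real_smul_eq_coe_mul]

namespace Matrix.IsHermitian
variable {𝕜 : Type*} [RCLike 𝕜] {n : ℕ} {A B : Matrix (Fin n) (Fin n) 𝕜}

lemma map_eigenvalues_eq_roots (hA : A.IsHermitian) :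
    Finset.univ.val.map hA.eigenvalues = A.charpoly.roots.map RCLike.re := by
  simp [hA.roots_charpoly_eq_eigenvalues, Function.comp_def]

lemma nthLargest_eigenvalues_eq_nthLargestOf (hA : A.IsHermitian) (r : ℕ) :
    nthLargest hA.eigenvalues r = nthLargestOf (A.charpoly.roots.map RCLike.re) r := by
  rw [nthLargest_eq_nthLargestOf, hA.map_eigenvalues_eq_roots]

-- Unlike `hA.eigenvalues`, `hA.eigenvalues₀` is sorted.
lemma nthLargest_eigenvalues_eq_getD (hA : A.IsHermitian) (r : ℕ) :
    nthLargest hA.eigenvalues r = (List.ofFn hA.eigenvalues₀).getD (r - 1) 0 := by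
  rw [nthLargest_eigenvalues_eq_nthLargestOf, nthLargestOf,
    hA.sort_roots_charpoly_eq_eigenvalues₀]

theorem nthLargest_eigenvalues_le (hA : A.IsHermitian) (hB : B.IsHermitian)
    (hAB : (B - A).PosSemidef) (r : ℕ) :
    nthLargest hA.eigenvalues r ≤ nthLargest hB.eigenvalues r := by
  rw [hA.nthLargest_eigenvalues_eq_getD, hB.nthLargest_eigenvalues_eq_getD]
  rcases lt_or_ge (r - 1) (Fintype.card (Fin n)) with h | h
  · rw [List.getD_eq_getElem _ _ (by simpa using h), List.getD_eq_getElem _ _ (by simpa using h),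
      List.getElem_ofFn, List.getElem_ofFn]
    refine LinearMap.IsSymmetric.eigenvalues_le_of_le _ _ ?_ _ _
    rwa [LinearMap.le_def, ← map_sub, isPositive_toEuclideanLin_iff]
  · rw [List.getD_eq_default _ _ (by simpa using h), List.getD_eq_default _ _ (by simpa using h)]

lemma nthLargest_eigenvalues_diagonal (d : Fin n → ℝ)
    (hD : (diagonal fun i => (d i : 𝕜)).IsHermitian) (r : ℕ) :
    nthLargest hD.eigenvalues r = nthLargest d r := by
  have hfactor : Finset.univ.val.map (fun i => X - C (d i : 𝕜)) =
      (Finset.univ.val.map fun i => (d i : 𝕜)).map (fun a => X - C a) := by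
    rw [Multiset.map_map]; rfl
  rw [nthLargest_eigenvalues_eq_nthLargestOf, charpoly_diagonal, Finset.prod_eq_multiset_prod,
    hfactor, roots_multiset_prod_X_sub_C, nthLargest_eq_nthLargestOf]
  simp [Function.comp_def]

lemma mul_nthLargest_le_nthLargest_eigenvalues (hA : A.IsHermitian) {f : Fin n → ℝ} {a : ℝ}
    (ha : 0 ≤ a) (h : (A - a • diagonal fun i => (f i : 𝕜)).PosSemidef) (r : ℕ) :
    a * nthLargest f r ≤ nthLargest hA.eigenvalues r := by
  rw [smul_diagonal_ofReal] at h
  rw [← nthLargest_const_mul f ha, ← nthLargest_eigenvalues_diagonal (fun i => a * f i)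
    (isHermitian_diagonal_ofReal (𝕜 := 𝕜) _)]
  exact (isHermitian_diagonal_ofReal _).nthLargest_eigenvalues_le hA h r

lemma nthLargest_eigenvalues_le_mul_nthLargest (hA : A.IsHermitian) {f : Fin n → ℝ} {a : ℝ}
    (ha : 0 ≤ a) (h : (a • (diagonal fun i => (f i : 𝕜)) - A).PosSemidef) (r : ℕ) :
    nthLargest hA.eigenvalues r ≤ a * nthLargest f r := by
  rw [smul_diagonal_ofReal] at h
  rw [← nthLargest_const_mul f ha, ← nthLargest_eigenvalues_diagonal (fun i => a * f i)
    (isHermitian_diagonal_ofReal (𝕜 := 𝕜) _)]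
  exact hA.nthLargest_eigenvalues_le (isHermitian_diagonal_ofReal _) h r

end Matrix.IsHermitian

lemma Matrix.nthLargest_eigenvalues_mul_conjTranspose {𝕜 : Type*} [RCLike 𝕜] {m q : ℕ}
    (A : Matrix (Fin m) (Fin q) 𝕜) (hqm : q ≤ m) (r : ℕ) :
    nthLargest (posSemidef_self_mul_conjTranspose A).isHermitian.eigenvalues r =
      nthLargest (posSemidef_conjTranspose_mul_self A).isHermitian.eigenvalues r := by
  have hK := posSemidef_conjTranspose_mul_self A
  rw [IsHermitian.nthLargest_eigenvalues_eq_nthLargestOf,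
    IsHermitian.nthLargest_eigenvalues_eq_nthLargestOf,
    roots_charpoly_mul_comm_of_le _ _ (by simpa using hqm), Multiset.map_add,
    Multiset.map_replicate, map_zero, nthLargestOf_replicate_zero_add]
  intro x hx
  rw [← IsHermitian.map_eigenvalues_eq_roots hK.isHermitian] at hx
  obtain ⟨i, -, rfl⟩ := Multiset.mem_map.mp hx
  exact hK.eigenvalues_nonneg i

lemma Matrix.posSemidef_conjTranspose_mul_sub_smul {m ι : Type*} [Fintype m] [Fintype ι]
    [DecidableEq ι] {G : Matrix m ι ℂ} {D : Matrix ι ι ℂ} (hD : Dᴴ = D) {a s : ℝ} (ha : 0 < a)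
    (h : (a⁻¹ • (Gᴴ * G) - (s : ℂ) • 1).PosSemidef) :
    ((G * D)ᴴ * (G * D) - (a * s) • (D * D)).PosSemidef := by
  convert (h.smul ha.le).mul_mul_conjTranspose_same D using 1
  rw [hD, smul_sub, smul_smul, mul_inv_cancel₀ ha.ne', one_smul, Matrix.mul_sub, Matrix.sub_mul,
    conjTranspose_mul, hD]
  simp [Matrix.mul_assoc, ← smul_assoc, Complex.coe_smul]

lemma Matrix.posSemidef_smul_sub_conjTranspose_mul {m ι : Type*} [Fintype m] [Fintype ι]
    [DecidableEq ι] {G : Matrix m ι ℂ} {D : Matrix ι ι ℂ} (hD : Dᴴ = D) {a s : ℝ} (ha : 0 < a)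
    (h : ((s : ℂ) • 1 - a⁻¹ • (Gᴴ * G)).PosSemidef) :
    ((a * s) • (D * D) - (G * D)ᴴ * (G * D)).PosSemidef := by
  convert (h.smul ha.le).mul_mul_conjTranspose_same D using 1
  rw [hD, smul_sub, smul_smul, mul_inv_cancel₀ ha.ne', one_smul, Matrix.mul_sub, Matrix.sub_mul,
    conjTranspose_mul, hD]
  simp [Matrix.mul_assoc, ← smul_assoc, Complex.coe_smul]

lemma Matrix.diagonal_rpow_neg_mul_self {ι : Type*} [Fintype ι] [DecidableEq ι] {c : ℝ}
    (hc : 0 ≤ c) (d : ι → ℝ) :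
    (diagonal fun l => ((c ^ (-d l) : ℝ) : ℂ)) * (diagonal fun l => ((c ^ (-d l) : ℝ) : ℂ)) =
      diagonal fun l => ((c ^ (-2 * d l) : ℝ) : ℂ) := by
  rw [diagonal_mul_diagonal]
  congr 1
  funext l
  rw [← Complex.ofReal_mul, ← sq, ← Real.rpow_natCast, ← Real.rpow_mul hc]
  congr 2
  push_cast
  ring

lemma eigsDesc_eq_nthLargest {n : ℕ} {A : Matrix (Fin n) (Fin n) ℂ} (hA : A.IsHermitian)
    (r : ℕ) : eigsDesc A r = nthLargest hA.eigenvalues r :=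
  dif_pos hA

theorem stmt_0_general
    (n q : ℕ) (hqn : q ≤ n)
    (θ : ℝ)
    (sm sp : ℝ) (hsm : 0 < sm) (hsp : sm ≤ sp)
    (G : Matrix (Fin n) (Fin q) ℂ)
    (hlow : ((n : ℝ)⁻¹ • (Gᴴ * G) - (sm : ℂ) • (1 : Matrix (Fin q) (Fin q) ℂ)).PosSemidef)
    (hup : ((sp : ℂ) • (1 : Matrix (Fin q) (Fin q) ℂ) - (n : ℝ)⁻¹ • (Gᴴ * G)).PosSemidef)
    (d : Fin q → ℝ)
    (Dbar : Matrix (Fin q) (Fin q) ℂ)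
    (hDbar : Dbar = Matrix.diagonal fun l =>
      ((‖1 - Complex.exp (-(θ : ℂ) * Complex.I)‖ ^ (-(d l)) : ℝ) : ℂ))
    (Schi : Matrix (Fin n) (Fin n) ℂ)
    (hSchi : Schi = G * (Dbar * Dbar) * Gᴴ) :
    (∀ r : ℕ, 1 ≤ r → r ≤ q →
      (n : ℝ) * sm *
          nthLargest
            (fun l => ‖1 - Complex.exp (-(θ : ℂ) * Complex.I)‖ ^ (-2 * d l)) r
        ≤ eigsDesc Schi r ∧
      eigsDesc Schi r ≤
        (n : ℝ) * sp *
          nthLargest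
            (fun l => ‖1 - Complex.exp (-(θ : ℂ) * Complex.I)‖ ^ (-2 * d l)) r) ∧
    (∀ r : ℕ, q + 1 ≤ r → r ≤ n → eigsDesc Schi r = 0) := by
  have hDbar_self : Dbarᴴ = Dbar := hDbar ▸ isHermitian_diagonal_ofReal _
  have hDbar_sq := hDbar ▸ diagonal_rpow_neg_mul_self (norm_nonneg _) d
  have hK := (posSemidef_conjTranspose_mul_self (G * Dbar)).isHermitian
  have hSchi_eig (r : ℕ) : eigsDesc Schi r = nthLargest hK.eigenvalues r := by
    have hSchi' : Schi = G * Dbar * (G * Dbar)ᴴ := by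
      rw [hSchi, conjTranspose_mul, hDbar_self]
      simp only [Matrix.mul_assoc]
    rw [hSchi', eigsDesc_eq_nthLargest (posSemidef_self_mul_conjTranspose _).isHermitian,
      nthLargest_eigenvalues_mul_conjTranspose _ hqn]
  refine ⟨fun r hr hrq => ?_, fun r hr _ => by rw [hSchi_eig, nthLargest_of_lt _ (by omega)]⟩
  have hn : (0 : ℝ) < n := by norm_cast; omega
  rw [hSchi_eig]
  exact ⟨hK.mul_nthLargest_le_nthLargest_eigenvalues (by positivity)
      (hDbar_sq ▸ posSemidef_conjTranspose_mul_sub_smul hDbar_self hn hlow) r,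
    hK.nthLargest_eigenvalues_le_mul_nthLargest (mul_nonneg hn.le (hsm.le.trans hsp))
      (hDbar_sq ▸ posSemidef_smul_sub_conjTranspose_mul hDbar_self hn hup) r⟩

/-- Lemma 1, case (a): eigenvalue bounds for the common-component spectral density when the
long-memory parameters vary across factors. -/
theorem stmt_0
    (n q : ℕ) (hq : 1 ≤ q) (hqn : q ≤ n)
    (θ : ℝ) (hθmem : θ ∈ Set.Icc (-π) π) (hθ : θ ≠ 0)
    (sm sp : ℝ) (hsm : 0 < sm) (hsp : sm ≤ sp)
    (G : Matrix (Fin n) (Fin q) ℂ)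
    (hlow : ((n : ℝ)⁻¹ • (Gᴴ * G) - (sm : ℂ) • (1 : Matrix (Fin q) (Fin q) ℂ)).PosSemidef)
    (hup : ((sp : ℂ) • (1 : Matrix (Fin q) (Fin q) ℂ) - (n : ℝ)⁻¹ • (Gᴴ * G)).PosSemidef)
    (d : Fin q → ℝ) (hd : ∀ l, d l ∈ Set.Ico (0 : ℝ) (1 / 2))
    (Dbar : Matrix (Fin q) (Fin q) ℂ)
    (hDbar : Dbar = Matrix.diagonal fun l =>
      ((‖1 - Complex.exp (-(θ : ℂ) * Complex.I)‖ ^ (-(d l)) : ℝ) : ℂ))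
    (Schi : Matrix (Fin n) (Fin n) ℂ)
    (hSchi : Schi = G * (Dbar * Dbar) * Gᴴ) :
    (∀ r : ℕ, 1 ≤ r → r ≤ q →
      (n : ℝ) * sm *
          nthLargest
            (fun l => ‖1 - Complex.exp (-(θ : ℂ) * Complex.I)‖ ^ (-2 * d l)) r
        ≤ eigsDesc Schi r ∧
      eigsDesc Schi r ≤
        (n : ℝ) * sp *
          nthLargest
            (fun l => ‖1 - Complex.exp (-(θ : ℂ) * Complex.I)‖ ^ (-2 * d l)) r) ∧
    (∀ r : ℕ, q + 1 ≤ r → r ≤ n → eigsDesc Schi r = 0) :=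
  stmt_0_general n q hqn θ sm sp hsm hsp G hlow hup d Dbar hDbar Schi hSchi
end

section
/- Let n ≥ 1, ρ ∈ (0, 1) and M > 0. Let F : ℝ → ℂⁿ be 2π-periodic and continuous on ℝ, and twice continuously differentiable on [−π, π] ∖ {0}, with ‖F′(θ)‖ ≤ M·|θ|^{ρ−1} and ‖F″(θ)‖ ≤ M·|θ|^{ρ−2} for all θ ∈ [−π, π] ∖ {0}. Then there is a constant C depending only on M and ρ such that for every nonzero integer h, ‖∫_{−π}^{π} F(θ)·e^{−ihθ} dθ‖ ≤ C·|h|^{−1−ρ}. -/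
/-!
Put `δ = π / |h|`. Translating by `δ` multiplies the `h`-th Fourier coefficient by `-1`, so the
coefficient of the second difference `Δ_δ² F` is `4` times that of `F`, and it suffices to show
`∫_{-π}^{π} ‖Δ_δ² F‖ = O(δ^{1+ρ})`. On `[-4δ, 2δ]` the Hölder bound `‖F x - F 0‖ ≤ (M/ρ)|x|^ρ`
(integrate `‖F'‖ ≤ M|x|^{ρ-1}` from the cusp) gives `‖Δ_δ² F‖ = O(δ^ρ)`. Away from the cusp,
`‖Δ_δ² F θ‖ ≤ δ² sup ‖F''‖ ≤ Mδ²(|θ| - 2δ)^{ρ-2}`, whose integral is `O(δ^{1+ρ})` because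
`ρ - 2 < -1`. Near `π` the window crosses the seam `π ≡ -π`, where only the Lipschitz bound
`‖F'‖ ≤ M` is available; on an interval of length `2δ` this costs `O(δ²)`. For `|h| < 4` the
trivial bound `‖F - F 0‖ ≤ (M/ρ)π^ρ` suffices.
-/

open MeasureTheory Set Filter Topology Function fwdDiff
open scoped Real Interval

section SecondDifference

theorem fwdDiff_fwdDiff_apply {E : Type*} [AddCommGroup E] (f : ℝ → E) (δ θ : ℝ) :
    Δ_[δ] (Δ_[δ] f) θ = f θ - 2 • f (θ + δ) + f (θ + 2 * δ) := by
  simp only [fwdDiff, show θ + δ + δ = θ + 2 * δ by ring]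
  abel

theorem fwdDiff_fwdDiff_comp_neg {E : Type*} [AddCommGroup E] (f : ℝ → E) (δ θ : ℝ) :
    Δ_[δ] (Δ_[δ] fun x ↦ f (-x)) (-2 * δ - θ) = Δ_[δ] (Δ_[δ] f) θ := by
  simp only [fwdDiff_fwdDiff_apply, show -(-2 * δ - θ) = θ + 2 * δ by ring,
    show -(-2 * δ - θ + δ) = θ + δ by ring, show -(-2 * δ - θ + 2 * δ) = θ by ring]
  abel

theorem Function.Periodic.fwdDiff {M G : Type*} [AddCommMonoid M] [AddCommGroup G] {f : M → G}
    {c : M} (hf : Periodic f c) (s : M) : Periodic (Δ_[s] f) c := fun x ↦ by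
  simp only [_root_.fwdDiff, add_right_comm x c, hf _]

variable {E : Type*} [NormedAddCommGroup E]

theorem norm_fwdDiff_fwdDiff_le_of_norm_sub_le {f : ℝ → E} {x₀ θ δ B : ℝ} (hδ : 0 ≤ δ)
    (hB : ∀ x ∈ Icc θ (θ + 2 * δ), ‖f x - f x₀‖ ≤ B) :
    ‖Δ_[δ] (Δ_[δ] f) θ‖ ≤ 4 * B := by
  have hΔ : Δ_[δ] (Δ_[δ] f) θ
      = (f θ - f x₀) - 2 • (f (θ + δ) - f x₀) + (f (θ + 2 * δ) - f x₀) := by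
    rw [fwdDiff_fwdDiff_apply]
    abel
  calc ‖Δ_[δ] (Δ_[δ] f) θ‖
      ≤ ‖f θ - f x₀‖ + 2 * ‖f (θ + δ) - f x₀‖ + ‖f (θ + 2 * δ) - f x₀‖ := by
        rw [hΔ]
        refine (norm_add_le _ _).trans (add_le_add_left ((norm_sub_le _ _).trans ?_) _)
        have h2 : ‖2 • (f (θ + δ) - f x₀)‖ ≤ (2 : ℕ) * ‖f (θ + δ) - f x₀‖ := norm_nsmul_le
        exact add_le_add_right (by simpa using h2) _
    _ ≤ B + 2 * B + B := by
        gcongr <;> apply hB <;> constructor <;> linarith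
    _ = 4 * B := by ring

theorem integral_norm_fwdDiff_fwdDiff_le_of_norm_sub_le {f : ℝ → E} {x₀ a b δ B : ℝ}
    (hab : a ≤ b) (hδ : 0 ≤ δ) (hB : ∀ x ∈ Icc a (b + 2 * δ), ‖f x - f x₀‖ ≤ B) :
    ∫ θ in a..b, ‖Δ_[δ] (Δ_[δ] f) θ‖ ≤ 4 * B * (b - a) := by
  have hpt : ∀ θ ∈ Ι a b, ‖‖Δ_[δ] (Δ_[δ] f) θ‖‖ ≤ 4 * B := by
    intro θ hθ
    rw [uIoc_of_le hab] at hθ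
    rw [norm_norm]
    exact norm_fwdDiff_fwdDiff_le_of_norm_sub_le hδ fun x hx ↦
      hB x ⟨hθ.1.le.trans hx.1, hx.2.trans (by linarith [hθ.2])⟩
  calc ∫ θ in a..b, ‖Δ_[δ] (Δ_[δ] f) θ‖
      ≤ ‖∫ θ in a..b, ‖Δ_[δ] (Δ_[δ] f) θ‖‖ := Real.le_norm_self _
    _ ≤ 4 * B * |b - a| := intervalIntegral.norm_integral_le_of_norm_le_const hpt
    _ = 4 * B * (b - a) := by rw [abs_of_nonneg (sub_nonneg.2 hab)]

theorem integral_norm_fwdDiff_fwdDiff_le_of_norm_sub_zero_le {f : ℝ → E} {ρ K b δ : ℝ}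
    (hρ : 0 ≤ ρ) (hK : 0 ≤ K) (hδ : 0 < δ) (hδb : 4 * δ ≤ b)
    (hf : ∀ x ∈ Icc (-b) b, ‖f x - f 0‖ ≤ K * |x| ^ ρ) :
    ∫ θ in (-(4 * δ))..(2 * δ), ‖Δ_[δ] (Δ_[δ] f) θ‖ ≤ 24 * 4 ^ ρ * K * δ ^ (1 + ρ) := by
  calc ∫ θ in (-(4 * δ))..(2 * δ), ‖Δ_[δ] (Δ_[δ] f) θ‖
      ≤ 4 * (K * (4 * δ) ^ ρ) * (2 * δ - -(4 * δ)) := by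
        refine integral_norm_fwdDiff_fwdDiff_le_of_norm_sub_le (by linarith) hδ.le
          fun x hx ↦ (hf x ⟨by linarith [hx.1], by linarith [hx.2]⟩).trans ?_
        exact mul_le_mul_of_nonneg_left (Real.rpow_le_rpow (abs_nonneg _)
          (abs_le.2 ⟨by linarith [hx.1], by linarith [hx.2]⟩) hρ) hK
    _ = 24 * 4 ^ ρ * K * δ ^ (1 + ρ) := by
        rw [Real.mul_rpow (by norm_num) hδ.le, Real.rpow_add hδ, Real.rpow_one]
        ring

theorem integral_norm_fwdDiff_fwdDiff_le_of_norm_sub_le_mul_abs {f : ℝ → E} {x₀ L δ : ℝ}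
    (hL : 0 ≤ L) (hδ : 0 ≤ δ)
    (hf : ∀ x ∈ Icc (x₀ - 2 * δ) (x₀ + 2 * δ), ‖f x - f x₀‖ ≤ L * |x - x₀|) :
    ∫ θ in (x₀ - 2 * δ)..x₀, ‖Δ_[δ] (Δ_[δ] f) θ‖ ≤ 16 * L * δ ^ 2 := by
  calc ∫ θ in (x₀ - 2 * δ)..x₀, ‖Δ_[δ] (Δ_[δ] f) θ‖
      ≤ 4 * (L * (2 * δ)) * (x₀ - (x₀ - 2 * δ)) := by
        refine integral_norm_fwdDiff_fwdDiff_le_of_norm_sub_le (by linarith) hδ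
          fun x hx ↦ (hf x hx).trans ?_
        exact mul_le_mul_of_nonneg_left
          (abs_le.2 ⟨by linarith [hx.1], by linarith [hx.2]⟩) hL
    _ = 16 * L * δ ^ 2 := by ring

variable [NormedSpace ℝ E]

theorem norm_fwdDiff_fwdDiff_le_of_norm_deriv_deriv_le {f f' f'' : ℝ → E} {a δ K : ℝ}
    (hδ : 0 ≤ δ)
    (hf : ∀ x ∈ Icc a (a + 2 * δ), HasDerivWithinAt f (f' x) (Icc a (a + 2 * δ)) x)
    (hf' : ∀ x ∈ Icc a (a + 2 * δ), HasDerivWithinAt f' (f'' x) (Icc a (a + 2 * δ)) x)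
    (bound : ∀ x ∈ Icc a (a + 2 * δ), ‖f'' x‖ ≤ K) :
    ‖Δ_[δ] (Δ_[δ] f) a‖ ≤ K * δ ^ 2 := by
  set s := Icc a (a + 2 * δ)
  set t := Icc a (a + δ)
  have hts : t ⊆ s := Icc_subset_Icc_right (by linarith)
  have hshift : MapsTo (· + δ) t s := fun x hx ↦ ⟨by linarith [hx.1], by linarith [hx.2]⟩
  have hderiv : ∀ x ∈ t, HasDerivWithinAt (Δ_[δ] f) (f' (x + δ) - f' x) t x := by
    intro x hx
    have hfδ := (hf _ (hshift hx)).scomp x ((hasDerivAt_id x).add_const δ).hasDerivWithinAt hshift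
    rw [one_smul] at hfδ
    exact hfδ.sub ((hf x (hts hx)).mono hts)
  have hderiv_le : ∀ x ∈ t, ‖f' (x + δ) - f' x‖ ≤ K * δ := fun x hx ↦ by
    simpa [abs_of_nonneg hδ] using
      (convex_Icc _ _).norm_image_sub_le_of_norm_hasDerivWithin_le hf' bound (hts hx) (hshift hx)
  simpa [fwdDiff, abs_of_nonneg hδ, sq, mul_assoc] using
    (convex_Icc _ _).norm_image_sub_le_of_norm_hasDerivWithin_le hderiv hderiv_le
      (left_mem_Icc.2 (by linarith)) (right_mem_Icc.2 (by linarith) : a + δ ∈ t)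

end SecondDifference

section FourierCoeff

variable {E : Type*} [NormedAddCommGroup E] [NormedSpace ℂ E]

noncomputable def unnormalizedFourierCoeff (f : ℝ → E) (h : ℤ) : E :=
  ∫ θ in (-π)..π, Complex.exp (-(h : ℂ) * (θ : ℂ) * Complex.I) • f θ

theorem norm_cexp_neg_intCast_mul_ofReal_mul_I (h : ℤ) (θ : ℝ) :
    ‖Complex.exp (-(h : ℂ) * (θ : ℂ) * Complex.I)‖ = 1 := by
  rw [show -(h : ℂ) * θ * Complex.I = ((-h * θ : ℝ) : ℂ) * Complex.I by push_cast; ring,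
    Complex.norm_exp_ofReal_mul_I]

theorem cexp_intCast_mul_pi_div_abs_mul_I {h : ℤ} (hh : h ≠ 0) :
    Complex.exp ((h : ℂ) * ((π / |(h : ℝ)| : ℝ) : ℂ) * Complex.I) = -1 := by
  rcases hh.lt_or_gt with hneg | hpos
  · have : (h : ℝ) * (π / |(h : ℝ)|) = -π := by
      rw [abs_of_neg (by exact_mod_cast hneg), mul_div_assoc', div_neg, mul_comm,
        mul_div_cancel_right₀ _ (by exact_mod_cast hneg.ne)]
    rw [← Complex.exp_neg_pi_mul_I, ← Complex.ofReal_intCast, ← Complex.ofReal_mul, this]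
    push_cast
    ring_nf
  · have : (h : ℝ) * (π / |(h : ℝ)|) = π := by
      rw [abs_of_pos (by exact_mod_cast hpos), mul_div_assoc', mul_comm,
        mul_div_cancel_right₀ _ (by exact_mod_cast hpos.ne')]
    rw [← Complex.exp_pi_mul_I, ← Complex.ofReal_intCast, ← Complex.ofReal_mul, this]

theorem norm_unnormalizedFourierCoeff_le (f : ℝ → E) (h : ℤ) :
    ‖unnormalizedFourierCoeff f h‖ ≤ ∫ θ in (-π)..π, ‖f θ‖ := by
  refine (intervalIntegral.norm_integral_le_integral_norm (by linarith [Real.pi_pos])).trans_eq ?_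
  simp only [norm_smul, norm_cexp_neg_intCast_mul_ofReal_mul_I, one_mul]

theorem Function.Periodic.unnormalizedFourierCoeff_comp_add_right {f : ℝ → E}
    (hf : Periodic f (2 * π)) (h : ℤ) (s : ℝ) :
    unnormalizedFourierCoeff (fun θ ↦ f (θ + s)) h
      = Complex.exp (h * s * Complex.I) • unnormalizedFourierCoeff f h := by
  set g : ℝ → E := fun θ ↦ Complex.exp (-(h : ℂ) * (θ : ℂ) * Complex.I) • f θ
  have hg : Periodic g (2 * π) := fun θ ↦ by
    have : -(h : ℂ) * ((θ + 2 * π : ℝ) : ℂ) * Complex.I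
        = -(h : ℂ) * θ * Complex.I + (-h : ℤ) * (2 * π * Complex.I) := by push_cast; ring
    simp only [g, this, Complex.exp_add, Complex.exp_int_mul_two_pi_mul_I, mul_one, hf θ]
  have hshift : ∀ θ : ℝ, Complex.exp (-(h : ℂ) * (θ : ℂ) * Complex.I) • f (θ + s)
      = Complex.exp (h * s * Complex.I) • g (θ + s) := fun θ ↦ by
    rw [smul_smul, ← Complex.exp_add]
    congr 2
    push_cast
    ring
  simp only [unnormalizedFourierCoeff, hshift, intervalIntegral.integral_smul,
    intervalIntegral.integral_comp_add_right g s]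
  congr 1
  have hperiod := hg.intervalIntegral_add_eq (-π + s) (-π)
  rw [show -π + s + 2 * π = π + s by ring, show -π + 2 * π = π by ring] at hperiod
  exact hperiod

theorem Function.Periodic.unnormalizedFourierCoeff_fwdDiff {f : ℝ → E} (hf : Periodic f (2 * π))
    (hc : Continuous f) (h : ℤ) (s : ℝ) :
    unnormalizedFourierCoeff (Δ_[s] f) h
      = (Complex.exp (h * s * Complex.I) - 1) • unnormalizedFourierCoeff f h := by
  have hint : ∀ g : ℝ → E, Continuous g → IntervalIntegrable
      (fun θ : ℝ ↦ Complex.exp (-(h : ℂ) * (θ : ℂ) * Complex.I) • g θ) volume (-π) π :=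
    fun g hg ↦ (by fun_prop : Continuous _).intervalIntegrable _ _
  rw [sub_smul, one_smul, ← hf.unnormalizedFourierCoeff_comp_add_right, unnormalizedFourierCoeff,
    unnormalizedFourierCoeff, unnormalizedFourierCoeff, ← intervalIntegral.integral_sub
      (hint _ (by fun_prop)) (hint f hc)]
  simp only [_root_.fwdDiff, smul_sub]

theorem Function.Periodic.unnormalizedFourierCoeff_fwdDiff_fwdDiff {f : ℝ → E}
    (hf : Periodic f (2 * π)) (hc : Continuous f) {h : ℤ} (hh : h ≠ 0) :
    unnormalizedFourierCoeff (Δ_[π / |(h : ℝ)|] (Δ_[π / |(h : ℝ)|] f)) h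
      = (4 : ℂ) • unnormalizedFourierCoeff f h := by
  rw [(hf.fwdDiff _).unnormalizedFourierCoeff_fwdDiff ((hc.comp (continuous_add_const _)).sub hc),
    hf.unnormalizedFourierCoeff_fwdDiff hc, cexp_intCast_mul_pi_div_abs_mul_I hh, smul_smul]
  norm_num

theorem unnormalizedFourierCoeff_sub_const {f : ℝ → E} (hc : Continuous f) {h : ℤ} (hh : h ≠ 0)
    (v : E) : unnormalizedFourierCoeff (fun θ ↦ f θ - v) h = unnormalizedFourierCoeff f h := by
  have hconst : unnormalizedFourierCoeff (fun _ ↦ v) h = 0 := by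
    -- translating by half a period `π / |h|` negates the coefficient and fixes the constant
    have hperiodic : Periodic (fun _ : ℝ ↦ v) (2 * π) := fun _ ↦ rfl
    have hshift := hperiodic.unnormalizedFourierCoeff_comp_add_right h (π / |(h : ℝ)|)
    have : IsAddTorsionFree E := .of_isTorsionFree ℂ E
    rwa [cexp_intCast_mul_pi_div_abs_mul_I hh, neg_one_smul, self_eq_neg] at hshift
  simp only [unnormalizedFourierCoeff, smul_sub] at hconst ⊢
  rw [intervalIntegral.integral_sub ((by fun_prop : Continuous _).intervalIntegrable _ _)
    ((by fun_prop : Continuous _).intervalIntegrable _ _), hconst, sub_zero]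

end FourierCoeff

section Cusp

variable {E : Type*} [NormedAddCommGroup E] [NormedSpace ℝ E]

theorem HasDerivWithinAt.comp_neg {f : ℝ → E} {f' : E} {s : Set ℝ} {x : ℝ}
    (hf : HasDerivWithinAt f f' s (-x)) : HasDerivWithinAt (fun y ↦ f (-y)) (-f') (-s) x := by
  have := hf.scomp x (hasDerivAt_neg x).hasDerivWithinAt (s := -s) fun y hy ↦ hy
  rwa [neg_one_smul] at this

theorem neg_Icc_sdiff_zero (b : ℝ) : -(Icc (-b) b \ {0}) = Icc (-b) b \ {0} := by
  ext x
  simp only [Set.mem_neg, Set.mem_sdiff, mem_Icc, mem_singleton_iff, neg_eq_zero]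
  constructor <;> rintro ⟨⟨h1, h2⟩, h3⟩ <;> exact ⟨⟨by linarith, by linarith⟩, h3⟩

theorem norm_sub_le_of_norm_deriv_le_rpow {f f' : ℝ → E} {ρ M b : ℝ} (hρ : 0 < ρ) (hb : 0 < b)
    (hf : ContinuousOn f (Icc 0 b)) (hf' : ∀ x ∈ Ioo 0 b, HasDerivAt f (f' x) x)
    (bound : ∀ x ∈ Ioo 0 b, ‖f' x‖ ≤ M * x ^ (ρ - 1)) :
    ‖f b - f 0‖ ≤ M / ρ * b ^ ρ := by
  have hε_bound : ∀ ε ∈ Ioo 0 b, ‖f b - f ε‖ ≤ M / ρ * (b ^ ρ - ε ^ ρ) := by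
    rintro ε ⟨hε, hεb⟩
    have hpos : ∀ x ∈ Ico ε b, x ∈ Ioo 0 b := fun x hx ↦ ⟨hε.trans_le hx.1, hx.2⟩
    refine image_norm_le_of_norm_deriv_right_le_deriv_boundary' (f := fun x ↦ f x - f ε)
      (B := fun x ↦ M / ρ * (x ^ ρ - ε ^ ρ)) (B' := fun x ↦ M * x ^ (ρ - 1))
      ((hf.mono (Icc_subset_Icc_left hε.le)).sub continuousOn_const)
      (fun x hx ↦ ((hf' x (hpos x hx)).sub_const _).hasDerivWithinAt) (by simp) ?_ ?_
      (fun x hx ↦ bound x (hpos x hx)) (right_mem_Icc.2 hεb.le)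
    · exact continuousOn_const.mul
        ((continuousOn_id.rpow_const fun _ _ ↦ Or.inr hρ.le).sub continuousOn_const)
    · intro x hx
      have hB := ((Real.hasDerivAt_rpow_const (p := ρ) (Or.inl (hpos x hx).1.ne')).sub_const
        (ε ^ ρ)).const_mul (M / ρ)
      rw [show M / ρ * (ρ * x ^ (ρ - 1)) = M * x ^ (ρ - 1) by field_simp] at hB
      exact hB.hasDerivWithinAt
  have hlim : Tendsto (fun ε ↦ M / ρ * (b ^ ρ - ε ^ ρ)) (𝓝[>] 0) (𝓝 (M / ρ * b ^ ρ)) := by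
    have := ((Real.continuousAt_rpow_const 0 ρ (Or.inr hρ.le)).tendsto.const_sub
      (b ^ ρ)).const_mul (M / ρ)
    simpa [Real.zero_rpow hρ.ne'] using this.mono_left nhdsWithin_le_nhds
  have hf0 : Tendsto (fun ε ↦ ‖f b - f ε‖) (𝓝[>] 0) (𝓝 ‖f b - f 0‖) := by
    refine ((hf 0 (left_mem_Icc.2 hb.le)).tendsto.mono_left ?_).const_sub (f b) |>.norm
    rw [← nhdsWithin_Ioo_eq_nhdsGT hb]
    exact nhdsWithin_mono _ Ioo_subset_Icc_self
  exact le_of_tendsto_of_tendsto hf0 hlim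
    (eventually_of_mem (Ioo_mem_nhdsGT hb) hε_bound)

theorem norm_sub_zero_le_rpow {f f' : ℝ → E} {ρ M b : ℝ} (hρ : 0 < ρ) (hc : Continuous f)
    (hf : ∀ x ∈ Icc (-b) b \ {0}, HasDerivWithinAt f (f' x) (Icc (-b) b \ {0}) x)
    (bound : ∀ x ∈ Icc (-b) b \ {0}, ‖f' x‖ ≤ M * |x| ^ (ρ - 1)) :
    ∀ x ∈ Icc (-b) b, ‖f x - f 0‖ ≤ M / ρ * |x| ^ ρ := by
  intro x hx
  wlog hx0 : 0 ≤ x generalizing f f' x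
  · have hneg := this (f := fun y ↦ f (-y)) (f' := fun y ↦ -f' (-y)) (hc.comp continuous_neg)
      (fun y hy ↦ by
        simpa only [neg_Icc_sdiff_zero] using
          (hf (-y) (by rwa [← neg_Icc_sdiff_zero] at hy)).comp_neg)
      (fun y hy ↦ by simpa using bound (-y) (by rwa [← neg_Icc_sdiff_zero] at hy))
      (-x) ⟨by linarith [hx.2], by linarith [hx.1]⟩ (by linarith)
    simpa using hneg
  rcases hx0.eq_or_lt with rfl | hx0
  · simp [Real.zero_rpow hρ.ne']
  have hsub : Ioo 0 b ⊆ Icc (-b) b \ {0} := fun y hy ↦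
    ⟨⟨by linarith [hy.1, hy.2], hy.2.le⟩, hy.1.ne'⟩
  have hxb : Ioo 0 x ⊆ Ioo 0 b := Ioo_subset_Ioo_right hx.2
  rw [abs_of_pos hx0]
  refine norm_sub_le_of_norm_deriv_le_rpow hρ hx0 hc.continuousOn
    (fun y hy ↦ (hf y (hsub (hxb hy))).hasDerivAt
      (mem_of_superset (Ioo_mem_nhds (hxb hy).1 (hxb hy).2) hsub)) fun y hy ↦ ?_
  simpa [abs_of_pos hy.1] using bound y (hsub (hxb hy))

theorem norm_sub_pi_le {f f' : ℝ → E} {ρ M : ℝ} (hρ : ρ ≤ 1) (hM : 0 ≤ M)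
    (hper : Periodic f (2 * π))
    (hf : ∀ x ∈ Icc (-π) π \ {0}, HasDerivWithinAt f (f' x) (Icc (-π) π \ {0}) x)
    (bound : ∀ x ∈ Icc (-π) π \ {0}, ‖f' x‖ ≤ M * |x| ^ (ρ - 1))
    {x : ℝ} (hx : x ∈ Icc (π / 2) (3 * π / 2)) : ‖f x - f π‖ ≤ M * |x - π| := by
  have hπ := Real.pi_gt_three
  have hlip : ∀ s ⊆ Icc (-π) π \ {0}, Convex ℝ s → (∀ y ∈ s, 1 ≤ |y|) →
      ∀ y ∈ s, ∀ z ∈ s, ‖f z - f y‖ ≤ M * ‖z - y‖ := fun s hs hconv hs1 y hy z hz ↦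
    hconv.norm_image_sub_le_of_norm_hasDerivWithin_le (fun w hw ↦ (hf w (hs hw)).mono hs)
      (fun w hw ↦ (bound w (hs hw)).trans (mul_le_of_le_one_right hM
        (Real.rpow_le_one_of_one_le_of_nonpos (hs1 w hw) (by linarith)))) hy hz
  rcases le_total x π with hxπ | hπx
  · have := hlip (Icc (π / 2) π)
      (fun y hy ↦ ⟨⟨by linarith [hy.1], hy.2⟩, (by linarith [hy.1] : (0 : ℝ) < y).ne'⟩)
      (convex_Icc _ _)
      (fun y hy ↦ by rw [abs_of_pos (by linarith [hy.1])]; linarith [hy.1])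
      x ⟨hx.1, hxπ⟩ π ⟨by linarith, le_rfl⟩
    rwa [norm_sub_rev, Real.norm_eq_abs, abs_sub_comm] at this
  · have := hlip (Icc (-π) (-(π / 2)))
      (fun y hy ↦ ⟨⟨hy.1, by linarith [hy.2]⟩, (by linarith [hy.2] : y < 0).ne⟩)
      (convex_Icc _ _)
      (fun y hy ↦ by rw [abs_of_neg (by linarith [hy.2])]; linarith [hy.2])
      (-π) ⟨le_rfl, by linarith⟩ (x - 2 * π) ⟨by linarith, by linarith [hx.2]⟩
    rwa [← hper, ← hper (-π), sub_add_cancel, show -π + 2 * π = π by ring,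
      show x - 2 * π - -π = x - π by ring, Real.norm_eq_abs] at this

theorem integral_rpow_le_of_lt_neg_one {a c r : ℝ} (ha : 0 < a) (hac : a ≤ c) (hr : r < -1) :
    ∫ x in a..c, x ^ r ≤ a ^ (r + 1) / -(r + 1) := by
  rw [integral_rpow (Or.inr ⟨hr.ne, fun h0 ↦ by
    rw [uIcc_of_le hac] at h0; linarith [h0.1]⟩), ← neg_div_neg_eq, neg_sub]
  gcongr
  · linarith
  · exact sub_le_self _ (Real.rpow_nonneg (ha.le.trans hac) _)

theorem integral_norm_fwdDiff_fwdDiff_le_of_norm_deriv_deriv_le_Ioc {f f' f'' : ℝ → E}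
    {ρ M b δ : ℝ} (hρ : ρ < 1) (hM : 0 ≤ M) (hc : Continuous f)
    (hf : ∀ x ∈ Ioc 0 b, HasDerivWithinAt f (f' x) (Ioc 0 b) x)
    (hf' : ∀ x ∈ Ioc 0 b, HasDerivWithinAt f' (f'' x) (Ioc 0 b) x)
    (bound : ∀ x ∈ Ioc 0 b, ‖f'' x‖ ≤ M * |x| ^ (ρ - 2)) (hδ : 0 < δ) (hδb : 4 * δ ≤ b) :
    ∫ θ in (2 * δ)..(b - 2 * δ), ‖Δ_[δ] (Δ_[δ] f) θ‖ ≤ M / (1 - ρ) * δ ^ (1 + ρ) := by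
  have hpt : ∀ θ ∈ Icc (2 * δ) (b - 2 * δ), ‖Δ_[δ] (Δ_[δ] f) θ‖ ≤ M * δ ^ 2 * θ ^ (ρ - 2) := by
    intro θ hθ
    have hsub : Icc θ (θ + 2 * δ) ⊆ Ioc 0 b := fun x hx ↦
      ⟨by linarith [hx.1, hθ.1], by linarith [hx.2, hθ.2]⟩
    rw [mul_right_comm]
    refine norm_fwdDiff_fwdDiff_le_of_norm_deriv_deriv_le hδ.le
      (fun x hx ↦ (hf x (hsub hx)).mono hsub) (fun x hx ↦ (hf' x (hsub hx)).mono hsub)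
      fun x hx ↦ (bound x (hsub hx)).trans ?_
    rw [abs_of_pos (hsub hx).1]
    exact mul_le_mul_of_nonneg_left
      (Real.rpow_le_rpow_of_nonpos (by linarith [hθ.1]) hx.1 (by linarith)) hM
  have hrpow : ContinuousOn (fun θ : ℝ ↦ θ ^ (ρ - 2)) (Icc (2 * δ) (b - 2 * δ)) :=
    fun θ hθ ↦ (Real.continuousAt_rpow_const _ _
      (Or.inl (by linarith [hθ.1] : (0 : ℝ) < θ).ne')).continuousWithinAt
  calc ∫ θ in (2 * δ)..(b - 2 * δ), ‖Δ_[δ] (Δ_[δ] f) θ‖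
      ≤ ∫ θ in (2 * δ)..(b - 2 * δ), M * δ ^ 2 * θ ^ (ρ - 2) := by
        refine intervalIntegral.integral_mono_on (by linarith)
          (Continuous.intervalIntegrable (by simp only [_root_.fwdDiff]; fun_prop) _ _) ?_ hpt
        exact (continuousOn_const.mul
          (hrpow.mono (by rw [uIcc_of_le (by linarith)]))).intervalIntegrable
    _ = M * δ ^ 2 * ∫ θ in (2 * δ)..(b - 2 * δ), θ ^ (ρ - 2) :=
        intervalIntegral.integral_const_mul ..
    _ ≤ M * δ ^ 2 * ((2 * δ) ^ (ρ - 1) / (1 - ρ)) := by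
        have hint := integral_rpow_le_of_lt_neg_one (a := 2 * δ) (c := b - 2 * δ) (r := ρ - 2)
          (by positivity) (by linarith) (by linarith)
        rw [show ρ - 2 + 1 = ρ - 1 by ring, show -(ρ - 1) = 1 - ρ by ring] at hint
        gcongr
    _ ≤ M * δ ^ 2 * (δ ^ (ρ - 1) / (1 - ρ)) := by
        refine mul_le_mul_of_nonneg_left
          (div_le_div_of_nonneg_right ?_ (by linarith)) (by positivity)
        exact Real.rpow_le_rpow_of_nonpos hδ (by linarith) (by linarith)
    _ = M / (1 - ρ) * δ ^ (1 + ρ) := by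
        rw [show (1 + ρ) = 2 + (ρ - 1) by ring, Real.rpow_add hδ, Real.rpow_two]
        ring

theorem integral_norm_fwdDiff_fwdDiff_le_of_norm_deriv_deriv_le_Ico {f f' f'' : ℝ → E}
    {ρ M b δ : ℝ} (hρ : ρ < 1) (hM : 0 ≤ M) (hc : Continuous f)
    (hf : ∀ x ∈ Ico (-b) 0, HasDerivWithinAt f (f' x) (Ico (-b) 0) x)
    (hf' : ∀ x ∈ Ico (-b) 0, HasDerivWithinAt f' (f'' x) (Ico (-b) 0) x)
    (bound : ∀ x ∈ Ico (-b) 0, ‖f'' x‖ ≤ M * |x| ^ (ρ - 2)) (hδ : 0 < δ) (hδb : 4 * δ ≤ b) :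
    ∫ θ in (-b)..(-(4 * δ)), ‖Δ_[δ] (Δ_[δ] f) θ‖ ≤ M / (1 - ρ) * δ ^ (1 + ρ) := by
  have hneg : -Ico (-b) 0 = Ioc 0 b := by simp
  have hmem : ∀ x ∈ Ioc 0 b, -x ∈ Ico (-b) 0 := fun x hx ↦ by rwa [← hneg] at hx
  set g : ℝ → E := fun x ↦ f (-x)
  have hg := integral_norm_fwdDiff_fwdDiff_le_of_norm_deriv_deriv_le_Ioc (f := g)
    (f' := fun x ↦ -f' (-x)) (f'' := fun x ↦ f'' (-x)) hρ hM (hc.comp continuous_neg)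
    (fun x hx ↦ by simpa only [hneg] using (hf (-x) (hmem x hx)).comp_neg)
    (fun x hx ↦ by simpa only [hneg, neg_neg] using (hf' (-x) (hmem x hx)).comp_neg.fun_neg)
    (fun x hx ↦ by simpa using bound (-x) (hmem x hx)) hδ hδb
  calc ∫ θ in (-b)..(-(4 * δ)), ‖Δ_[δ] (Δ_[δ] f) θ‖
      = ∫ θ in (-b)..(-(4 * δ)), ‖Δ_[δ] (Δ_[δ] g) (-2 * δ - θ)‖ := by
        simp only [g, fwdDiff_fwdDiff_comp_neg]
    _ = ∫ θ in (2 * δ)..(b - 2 * δ), ‖Δ_[δ] (Δ_[δ] g) θ‖ := by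
        rw [intervalIntegral.integral_comp_sub_left (fun θ ↦ ‖Δ_[δ] (Δ_[δ] g) θ‖)]
        congr 1 <;> ring
    _ ≤ M / (1 - ρ) * δ ^ (1 + ρ) := hg

theorem integral_norm_fwdDiff_fwdDiff_le {f f' f'' : ℝ → E} {ρ M δ : ℝ} (hρ : ρ ∈ Ioo 0 1)
    (hM : 0 ≤ M) (hper : Periodic f (2 * π)) (hc : Continuous f)
    (hf : ∀ x ∈ Icc (-π) π \ {0}, HasDerivWithinAt f (f' x) (Icc (-π) π \ {0}) x)
    (hf' : ∀ x ∈ Icc (-π) π \ {0}, HasDerivWithinAt f' (f'' x) (Icc (-π) π \ {0}) x)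
    (bound : ∀ x ∈ Icc (-π) π \ {0}, ‖f' x‖ ≤ M * |x| ^ (ρ - 1))
    (bound' : ∀ x ∈ Icc (-π) π \ {0}, ‖f'' x‖ ≤ M * |x| ^ (ρ - 2))
    (hδ : 0 < δ) (hδπ : 4 * δ ≤ π) :
    ∫ θ in (-π)..π, ‖Δ_[δ] (Δ_[δ] f) θ‖
      ≤ (2 * (M / (1 - ρ)) + 24 * 4 ^ ρ * (M / ρ) + 16 * M) * δ ^ (1 + ρ) := by
  obtain ⟨hρ0, hρ1⟩ := hρ
  have hπ := Real.pi_gt_three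
  have hπ4 := Real.pi_le_four
  have hint : ∀ a b : ℝ, IntervalIntegrable (fun θ ↦ ‖Δ_[δ] (Δ_[δ] f) θ‖) volume a b :=
    fun a b ↦ Continuous.intervalIntegrable (by simp only [_root_.fwdDiff]; fun_prop) a b
  have hpos : Ioc 0 π ⊆ Icc (-π) π \ {0} := fun x hx ↦ ⟨⟨by linarith [hx.1], hx.2⟩, hx.1.ne'⟩
  have hneg : Ico (-π) 0 ⊆ Icc (-π) π \ {0} := fun x hx ↦ ⟨⟨hx.1, by linarith [hx.2]⟩, hx.2.ne⟩
  have hA := integral_norm_fwdDiff_fwdDiff_le_of_norm_deriv_deriv_le_Ico hρ1 hM hc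
    (fun x hx ↦ (hf x (hneg hx)).mono hneg) (fun x hx ↦ (hf' x (hneg hx)).mono hneg)
    (fun x hx ↦ bound' x (hneg hx)) hδ hδπ
  have hB := integral_norm_fwdDiff_fwdDiff_le_of_norm_sub_zero_le hρ0.le (div_nonneg hM hρ0.le) hδ
    hδπ (norm_sub_zero_le_rpow hρ0 hc hf bound)
  have hC := integral_norm_fwdDiff_fwdDiff_le_of_norm_deriv_deriv_le_Ioc hρ1 hM hc
    (fun x hx ↦ (hf x (hpos hx)).mono hpos) (fun x hx ↦ (hf' x (hpos hx)).mono hpos)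
    (fun x hx ↦ bound' x (hpos hx)) hδ hδπ
  have hD := integral_norm_fwdDiff_fwdDiff_le_of_norm_sub_le_mul_abs (x₀ := π) hM hδ.le fun x hx ↦
    norm_sub_pi_le hρ1.le hM hper hf bound (x := x) ⟨by linarith [hx.1], by linarith [hx.2]⟩
  have hδsq : 16 * M * δ ^ 2 ≤ 16 * M * δ ^ (1 + ρ) := by
    rw [← Real.rpow_two]
    exact mul_le_mul_of_nonneg_left
      (Real.rpow_le_rpow_of_exponent_ge hδ (by linarith) (by linarith)) (by positivity)
  have hsplit₁ := intervalIntegral.integral_add_adjacent_intervals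
    (hint (-π) (-(4 * δ))) (hint _ π)
  have hsplit₂ := intervalIntegral.integral_add_adjacent_intervals
    (hint (-(4 * δ)) (2 * δ)) (hint _ π)
  have hsplit₃ := intervalIntegral.integral_add_adjacent_intervals
    (hint (2 * δ) (π - 2 * δ)) (hint _ π)
  linarith

end Cusp

section FourierDecay

variable {E : Type*} [NormedAddCommGroup E] [NormedSpace ℂ E]

theorem norm_unnormalizedFourierCoeff_le_of_norm_sub_le {f : ℝ → E} {B : ℝ} (hc : Continuous f)
    {h : ℤ} (hh : h ≠ 0) (hB : ∀ x ∈ Icc (-π) π, ‖f x - f 0‖ ≤ B) :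
    ‖unnormalizedFourierCoeff f h‖ ≤ 2 * π * B := by
  rw [← unnormalizedFourierCoeff_sub_const hc hh (f 0)]
  refine (norm_unnormalizedFourierCoeff_le _ h).trans ?_
  calc ∫ θ in (-π)..π, ‖f θ - f 0‖
      ≤ ∫ _ in (-π)..π, B := intervalIntegral.integral_mono_on (by linarith [Real.pi_pos])
        ((by fun_prop : Continuous _).intervalIntegrable _ _) intervalIntegrable_const hB
    _ = 2 * π * B := by rw [intervalIntegral.integral_const, smul_eq_mul]; ring

theorem norm_unnormalizedFourierCoeff_le_of_four_le {f f' f'' : ℝ → E} {ρ M : ℝ}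
    (hρ : ρ ∈ Ioo 0 1) (hM : 0 ≤ M) (hper : Periodic f (2 * π)) (hc : Continuous f)
    (hf : ∀ x ∈ Icc (-π) π \ {0}, HasDerivWithinAt f (f' x) (Icc (-π) π \ {0}) x)
    (hf' : ∀ x ∈ Icc (-π) π \ {0}, HasDerivWithinAt f' (f'' x) (Icc (-π) π \ {0}) x)
    (bound : ∀ x ∈ Icc (-π) π \ {0}, ‖f' x‖ ≤ M * |x| ^ (ρ - 1))
    (bound' : ∀ x ∈ Icc (-π) π \ {0}, ‖f'' x‖ ≤ M * |x| ^ (ρ - 2))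
    {h : ℤ} (hh : 4 ≤ |(h : ℝ)|) :
    ‖unnormalizedFourierCoeff f h‖
      ≤ (2 * (M / (1 - ρ)) + 24 * 4 ^ ρ * (M / ρ) + 16 * M) / 4 * π ^ (1 + ρ)
        * |(h : ℝ)| ^ (-1 - ρ) := by
  have hh0 : h ≠ 0 := by rintro rfl; norm_num at hh
  have hδ : 0 < π / |(h : ℝ)| := by positivity
  have hδπ : 4 * (π / |(h : ℝ)|) ≤ π := by
    rw [mul_div_assoc', div_le_iff₀ (by positivity)]
    nlinarith [Real.pi_pos]
  calc ‖unnormalizedFourierCoeff f h‖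
      = ‖unnormalizedFourierCoeff (Δ_[π / |(h : ℝ)|] (Δ_[π / |(h : ℝ)|] f)) h‖ / 4 := by
        rw [hper.unnormalizedFourierCoeff_fwdDiff_fwdDiff hc hh0, norm_smul]
        norm_num
    _ ≤ (2 * (M / (1 - ρ)) + 24 * 4 ^ ρ * (M / ρ) + 16 * M)
          * (π / |(h : ℝ)|) ^ (1 + ρ) / 4 := by
        gcongr
        exact (norm_unnormalizedFourierCoeff_le _ h).trans
          (integral_norm_fwdDiff_fwdDiff_le hρ hM hper hc hf hf' bound bound' hδ hδπ)
    _ = _ := by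
        rw [Real.div_rpow Real.pi_pos.le (abs_nonneg _), show -1 - ρ = -(1 + ρ) by ring,
          Real.rpow_neg (abs_nonneg _)]
        ring

theorem norm_unnormalizedFourierCoeff_le_rpow {f f' f'' : ℝ → E} {ρ M : ℝ}
    (hρ : ρ ∈ Ioo 0 1) (hM : 0 ≤ M) (hper : Periodic f (2 * π)) (hc : Continuous f)
    (hf : ∀ x ∈ Icc (-π) π \ {0}, HasDerivWithinAt f (f' x) (Icc (-π) π \ {0}) x)
    (hf' : ∀ x ∈ Icc (-π) π \ {0}, HasDerivWithinAt f' (f'' x) (Icc (-π) π \ {0}) x)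
    (bound : ∀ x ∈ Icc (-π) π \ {0}, ‖f' x‖ ≤ M * |x| ^ (ρ - 1))
    (bound' : ∀ x ∈ Icc (-π) π \ {0}, ‖f'' x‖ ≤ M * |x| ^ (ρ - 2)) {h : ℤ} (hh : h ≠ 0) :
    ‖unnormalizedFourierCoeff f h‖
      ≤ π ^ (1 + ρ) * ((2 * (M / (1 - ρ)) + 24 * 4 ^ ρ * (M / ρ) + 16 * M) / 4
        + 2 * 4 ^ (1 + ρ) * (M / ρ)) * |(h : ℝ)| ^ (-1 - ρ) := by
  obtain ⟨hρ0, hρ1⟩ := hρ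
  have hMρ : 0 ≤ M / ρ := div_nonneg hM hρ0.le
  have hpow : 0 ≤ |(h : ℝ)| ^ (-1 - ρ) := by positivity
  rcases le_or_gt 4 |(h : ℝ)| with hbig | hsmall
  · refine (norm_unnormalizedFourierCoeff_le_of_four_le ⟨hρ0, hρ1⟩ hM hper hc hf hf' bound bound'
      hbig).trans (mul_le_mul_of_nonneg_right ?_ hpow)
    rw [mul_comm (π ^ (1 + ρ))]
    exact mul_le_mul_of_nonneg_right (le_add_of_nonneg_right (by positivity)) (by positivity)
  · have hB : ∀ x ∈ Icc (-π) π, ‖f x - f 0‖ ≤ M / ρ * π ^ ρ := fun x hx ↦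
      (norm_sub_zero_le_rpow hρ0 hc hf bound x hx).trans (mul_le_mul_of_nonneg_left
        (Real.rpow_le_rpow (abs_nonneg x) (abs_le.2 hx) hρ0.le) hMρ)
    have hone : 1 ≤ 4 ^ (1 + ρ) * |(h : ℝ)| ^ (-1 - ρ) := by
      have habs : 0 < |(h : ℝ)| := by positivity
      rw [show -1 - ρ = -(1 + ρ) by ring, Real.rpow_neg habs.le, ← div_eq_mul_inv,
        one_le_div (by positivity)]
      exact Real.rpow_le_rpow habs.le hsmall.le (by linarith)
    calc ‖unnormalizedFourierCoeff f h‖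
        ≤ 2 * π * (M / ρ * π ^ ρ) := norm_unnormalizedFourierCoeff_le_of_norm_sub_le hc hh hB
      _ = π ^ (1 + ρ) * (2 * (M / ρ)) * 1 := by
          rw [Real.rpow_add Real.pi_pos, Real.rpow_one]; ring
      _ ≤ π ^ (1 + ρ) * (2 * (M / ρ)) * (4 ^ (1 + ρ) * |(h : ℝ)| ^ (-1 - ρ)) := by gcongr
      _ = π ^ (1 + ρ) * (2 * 4 ^ (1 + ρ) * (M / ρ)) * |(h : ℝ)| ^ (-1 - ρ) := by ring
      _ ≤ _ := by
          gcongr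
          exact le_add_of_nonneg_left (by positivity)

end FourierDecay

/-- Fourier-coefficient decay for a periodic vector-valued function with a cusp at `0`:
if `F` is continuous, `2π`-periodic, twice continuously differentiable on `[−π,π] ∖ {0}` with
`‖F′(θ)‖ ≤ M|θ|^{ρ−1}` and `‖F″(θ)‖ ≤ M|θ|^{ρ−2}`, then
`‖∫ F(θ)e^{−ihθ} dθ‖ ≤ C|h|^{−1−ρ}` with `C` depending only on `M` and `ρ`. -/
theorem stmt_4
    (ρ : ℝ) (hρ : ρ ∈ Set.Ioo (0 : ℝ) 1) (M : ℝ) (hM : 0 < M) :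
    ∃ C : ℝ, ∀ n : ℕ, 1 ≤ n →
      ∀ F F' F'' : ℝ → EuclideanSpace ℂ (Fin n),
      Function.Periodic F (2 * π) →
      Continuous F →
      (∀ θ ∈ Set.Icc (-π) π \ {0}, HasDerivWithinAt F (F' θ) (Set.Icc (-π) π \ {0}) θ) →
      (∀ θ ∈ Set.Icc (-π) π \ {0}, HasDerivWithinAt F' (F'' θ) (Set.Icc (-π) π \ {0}) θ) →
      ContinuousOn F' (Set.Icc (-π) π \ {0}) →
      ContinuousOn F'' (Set.Icc (-π) π \ {0}) →
      (∀ θ ∈ Set.Icc (-π) π \ {0}, ‖F' θ‖ ≤ M * |θ| ^ (ρ - 1)) →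
      (∀ θ ∈ Set.Icc (-π) π \ {0}, ‖F'' θ‖ ≤ M * |θ| ^ (ρ - 2)) →
      ∀ h : ℤ, h ≠ 0 →
        ‖∫ θ in (-π)..π, Complex.exp (-(h : ℂ) * (θ : ℂ) * Complex.I) • F θ‖
          ≤ C * |(h : ℝ)| ^ (-1 - ρ) :=
  ⟨_, fun _ _ _ _ _ hper hc hF hF' _ _ hb hb' _ hh ↦
    norm_unnormalizedFourierCoeff_le_rpow hρ hM.le hper hc hF hF' hb hb' hh⟩
end

section
/- Let n ≥ 2 and δ > 0. Let B : ℝ → ℂ^{n×n} be a differentiable family of Hermitian matrices such that for every θ the largest eigenvalue is simple with uniform spectral gap λ₁(B(θ)) − λ₂(B(θ)) ≥ δ, where λ₁ and λ₂ denote the largest and second largest eigenvalues. Let v : ℝ → ℂⁿ be differentiable with ‖v(θ)‖ = 1 and B(θ)·v(θ) = λ₁(B(θ))·v(θ) for every θ, and set P(θ) = v(θ)·v(θ)*. Then ‖P′(θ)‖ ≤ 2‖B′(θ)‖/δ for every θ. -/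
open Matrix
open scoped Real Matrix.Norms.L2Operator ComplexOrder

/-!
Differentiating `B v = λ v` gives `(B - λ) v' = λ' v - B' v`. Split `v' = a v + w` with `w ⟂ v`;
since `‖v‖ = 1` the coefficient `a` is purely imaginary, so `P' = v' v* + v v'* = w v* + v w*` and
`‖P'‖ ≤ 2 ‖w‖`. Because `λ` is simple with gap `δ`, `B - λ` is bounded below by `δ` on `v⟂`; and
`(B - λ) w = λ' v - B' v` is orthogonal to `v`, so it is no longer than `B' v`. Hence
`δ ‖w‖ ≤ ‖B' v‖ ≤ ‖B'‖`.
-/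

section nthLargest

variable {m : ℕ} (f : Fin m → ℝ)

lemma nthLargest_eq_getElem {r : ℕ} (hr : 1 ≤ r) (hrm : r ≤ m) :
    nthLargest f r = ((Finset.univ.val.map f).sort (· ≤ ·))[m - r]'(by simp; omega) := by
  have hlen : ((Finset.univ.val.map f).sort (· ≤ ·)).length = m := by simp
  rw [nthLargest, List.getD_eq_getElem _ _ (by simp; omega), List.getElem_reverse]
  congr 1
  omega

lemma eq_of_nthLargest_two_lt {i j : Fin m}
    (hi : nthLargest f 2 < f i) (hj : nthLargest f 2 < f j) : i = j := by
  obtain hm | hm := lt_or_ge m 2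
  · exact (Fin.subsingleton_iff_le_one.2 (by omega)).elim i j
  set L := (Finset.univ.val.map f).sort (· ≤ ·)
  have hlen : L.length = m := by simp [L]
  have htake : (L.take (m - 1)).countP (nthLargest f 2 < ·) = 0 := by
    refine List.countP_eq_zero.2 fun x hx => ?_
    obtain ⟨k, hk, rfl⟩ := List.getElem_of_mem hx
    simp only [List.length_take, hlen] at hk
    rw [List.getElem_take, decide_eq_true_eq, not_lt, nthLargest_eq_getElem f one_le_two hm]
    exact (Multiset.pairwise_sort _ _).rel_get_of_le (a := ⟨k, by simp; omega⟩)
      (b := ⟨m - 2, by simp; omega⟩) (by simp only [Fin.mk_le_mk]; omega)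
  have hcount : L.countP (nthLargest f 2 < ·) ≤ 1 := by
    rw [← List.take_append_drop (m - 1) L, List.countP_append, htake, zero_add]
    exact List.countP_le_length.trans (by simp [hlen]; omega)
  have hcard : (Finset.univ.filter (fun k => nthLargest f 2 < f k)).card ≤ 1 := by
    have : (Finset.univ.filter (fun k => nthLargest f 2 < f k)).card =
        L.countP (nthLargest f 2 < ·) := by
      rw [← Multiset.coe_countP, Multiset.sort_eq, Multiset.countP_map]
      rfl
    rwa [this]
  exact Finset.card_le_one.1 hcard i (by simpa using hi) j (by simpa using hj)

end nthLargest

open scoped InnerProductSpace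

lemma norm_le_norm_smul_sub_of_inner_eq_zero {𝕜 E : Type*} [RCLike 𝕜] [NormedAddCommGroup E]
    [InnerProductSpace 𝕜 E] {u y : E} (h : ⟪u, y⟫_𝕜 = 0) (a : 𝕜) :
    ‖y‖ ≤ ‖a • u - y‖ := by
  have hpyth := norm_add_sq_eq_norm_sq_add_norm_sq_of_inner_eq_zero (𝕜 := 𝕜) (a • u) (-y)
    (by rw [inner_neg_right, inner_smul_left, h, mul_zero, neg_zero])
  rw [← sub_eq_add_neg, norm_neg] at hpyth
  refine mul_self_le_mul_self_iff (norm_nonneg _) (norm_nonneg _) |>.2 ?_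
  rw [hpyth]
  exact le_add_of_nonneg_left (mul_self_nonneg _)

namespace LinearMap.IsSymmetric

variable {𝕜 E ι : Type*} [RCLike 𝕜] [NormedAddCommGroup E] [InnerProductSpace 𝕜 E] [Fintype ι]
  {T : E →ₗ[𝕜] E}

lemma inner_apply_sub_smul_eq_zero (hT : T.IsSymmetric) {c : ℝ} {v : E} (hv : T v = (c : 𝕜) • v)
    (w : E) : ⟪v, T w - (c : 𝕜) • w⟫_𝕜 = 0 := by
  rw [inner_sub_right, ← hT, hv, inner_smul_left, inner_smul_right, RCLike.conj_ofReal, sub_self]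

lemma inner_apply_sub_smul_of_eigenbasis (hT : T.IsSymmetric) (b : OrthonormalBasis ι 𝕜 E)
    {μ : ι → ℝ} (hb : ∀ i, T (b i) = (μ i : 𝕜) • b i) (c : ℝ) (x : E) (i : ι) :
    ⟪b i, T x - (c : 𝕜) • x⟫_𝕜 = ((μ i - c : ℝ) : 𝕜) * ⟪b i, x⟫_𝕜 := by
  rw [inner_sub_right, inner_smul_right, ← hT, hb, inner_smul_left, RCLike.conj_ofReal]
  push_cast
  ring

lemma mul_norm_le_norm_apply_sub_smul (hT : T.IsSymmetric) (b : OrthonormalBasis ι 𝕜 E)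
    {μ : ι → ℝ} (hb : ∀ i, T (b i) = (μ i : 𝕜) • b i) {c δ : ℝ} (hδ : 0 ≤ δ) {x : E}
    (hx : ∀ i, ⟪b i, x⟫_𝕜 ≠ 0 → δ ≤ |μ i - c|) :
    δ * ‖x‖ ≤ ‖T x - (c : 𝕜) • x‖ := by
  refine pow_le_pow_iff_left₀ (by positivity) (norm_nonneg _) two_ne_zero |>.1 ?_
  calc (δ * ‖x‖) ^ 2 = ∑ i, δ ^ 2 * ‖⟪b i, x⟫_𝕜‖ ^ 2 := by
        rw [mul_pow, ← b.sum_sq_norm_inner_right, Finset.mul_sum]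
    _ ≤ ∑ i, ‖⟪b i, T x - (c : 𝕜) • x⟫_𝕜‖ ^ 2 := by
        refine Finset.sum_le_sum fun i _ => ?_
        rw [inner_apply_sub_smul_of_eigenbasis hT b hb, norm_mul, mul_pow, RCLike.norm_ofReal]
        by_cases h : ⟪b i, x⟫_𝕜 = 0
        · simp [h]
        · gcongr
          exact hx i h
    _ = ‖T x - (c : 𝕜) • x‖ ^ 2 := b.sum_sq_norm_inner_right _

lemma inner_eigenbasis_eq_zero_of_inner_eq_zero (hT : T.IsSymmetric) (b : OrthonormalBasis ι 𝕜 E)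
    {μ : ι → ℝ} (hb : ∀ i, T (b i) = (μ i : 𝕜) • b i) {c : ℝ} {v w : E}
    (hv : T v = (c : 𝕜) • v) (hv0 : v ≠ 0) {i : ι} (hi : ∀ j ≠ i, μ j ≠ c)
    (hvw : ⟪v, w⟫_𝕜 = 0) : ⟪b i, w⟫_𝕜 = 0 := by
  have hvj : ∀ j ≠ i, ⟪b j, v⟫_𝕜 = 0 := fun j hj => by
    have := inner_apply_sub_smul_of_eigenbasis hT b hb c v j
    rw [hv, sub_self, inner_zero_right, eq_comm, mul_eq_zero] at this
    exact this.resolve_left (by exact_mod_cast sub_ne_zero.2 (hi j hj))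
  have hv_eq : v = ⟪b i, v⟫_𝕜 • b i := by
    conv_lhs => rw [← b.sum_repr' v]
    exact Finset.sum_eq_single i (fun j _ hj => by rw [hvj j hj, zero_smul]) (by simp)
  have hvi : ⟪b i, v⟫_𝕜 ≠ 0 := fun h => hv0 (by rw [hv_eq, h, zero_smul])
  rw [hv_eq, inner_smul_left, mul_eq_zero] at hvw
  exact hvw.resolve_left ((map_ne_zero _).2 hvi)

lemma mul_norm_le_norm_apply_sub_smul_of_inner_eq_zero (hT : T.IsSymmetric)
    (b : OrthonormalBasis ι 𝕜 E) {μ : ι → ℝ} (hb : ∀ i, T (b i) = (μ i : 𝕜) • b i) {c δ : ℝ}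
    (hδ : 0 < δ) (hsimple : ∀ i j, c - δ < μ i → c - δ < μ j → i = j) {v w : E}
    (hv : T v = (c : 𝕜) • v) (hv0 : v ≠ 0) (hvw : ⟪v, w⟫_𝕜 = 0) :
    δ * ‖w‖ ≤ ‖T w - (c : 𝕜) • w‖ := by
  refine mul_norm_le_norm_apply_sub_smul hT b hb hδ.le fun i hi => ?_
  by_contra! hlt
  have hci : c - δ < μ i := by linarith [(abs_lt.1 hlt).1]
  exact hi <| inner_eigenbasis_eq_zero_of_inner_eq_zero hT b hb hv hv0
    (fun j hj hjc => hj (hsimple j i (by linarith) hci)) hvw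

end LinearMap.IsSymmetric

namespace Matrix

lemma star_dotProduct_self_eq_one {𝕜 n : Type*} [RCLike 𝕜] [Fintype n] {v : n → 𝕜}
    (hv : ‖WithLp.toLp 2 v‖ = 1) : star v ⬝ᵥ v = 1 := by
  have := inner_self_eq_norm_sq_to_K (𝕜 := 𝕜) (WithLp.toLp 2 v)
  rwa [hv, EuclideanSpace.inner_toLp_toLp, dotProduct_comm, RCLike.ofReal_one, one_pow] at this

variable {𝕜 m n : Type*} [RCLike 𝕜] [Fintype m] [Fintype n] [DecidableEq n]

lemma l2_opNorm_vecMulVec_star (x : m → 𝕜) (y : n → 𝕜) :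
    ‖vecMulVec x (star y)‖ = ‖WithLp.toLp 2 x‖ * ‖WithLp.toLp 2 y‖ := by
  rw [l2_opNorm_def, ← InnerProductSpace.symm_toEuclideanLin_rankOne, LinearEquiv.trans_apply,
    LinearEquiv.apply_symm_apply]
  exact InnerProductSpace.norm_rankOne _ _

lemma l2_opNorm_vecMulVec_add_vecMulVec_le {v v' : n → 𝕜} (hv : ‖WithLp.toLp 2 v‖ = 1)
    (hv' : star v' ⬝ᵥ v + star v ⬝ᵥ v' = 0) :
    ‖vecMulVec v' (star v) + vecMulVec v (star v')‖ ≤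
      2 * ‖WithLp.toLp 2 (v' - (star v ⬝ᵥ v') • v)‖ := by
  set w := v' - (star v ⬝ᵥ v') • v
  -- `star v ⬝ᵥ v'` is purely imaginary, so its multiples of `vecMulVec v (star v)` cancel
  have hsplit : vecMulVec v' (star v) + vecMulVec v (star v') =
      vecMulVec w (star v) + (vecMulVec w (star v))ᴴ := by
    have ha : star (star v ⬝ᵥ v') = star v' ⬝ᵥ v := (star_dotProduct v' v).symm
    ext i j
    simp only [w, add_apply, conjTranspose_vecMulVec, star_star, vecMulVec_apply, Pi.sub_apply,
      Pi.smul_apply, Pi.star_apply, smul_eq_mul, star_sub, star_mul', ha]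
    linear_combination (v i * star (v j)) * hv'
  calc ‖vecMulVec v' (star v) + vecMulVec v (star v')‖
      ≤ ‖vecMulVec w (star v)‖ + ‖(vecMulVec w (star v))ᴴ‖ := hsplit ▸ norm_add_le _ _
    _ = 2 * ‖WithLp.toLp 2 w‖ := by
      rw [l2_opNorm_conjTranspose, l2_opNorm_vecMulVec_star, hv]
      ring

lemma IsHermitian.toEuclideanLin_eigenvectorBasis {A : Matrix n n 𝕜} (hA : A.IsHermitian) (i : n) :
    toEuclideanLin A (hA.eigenvectorBasis i) =
      (hA.eigenvalues i : 𝕜) • hA.eigenvectorBasis i := by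
  rw [← RCLike.real_smul_eq_coe_smul]
  exact congrArg (WithLp.toLp 2) (hA.mulVec_eigenvectorBasis i)

lemma IsHermitian.mul_norm_sub_smul_le_l2_opNorm {A : Matrix n n 𝕜} (hA : A.IsHermitian)
    {c δ : ℝ} (hδ : 0 < δ)
    (hsimple : ∀ i j, c - δ < hA.eigenvalues i → c - δ < hA.eigenvalues j → i = j)
    {v v' : n → 𝕜} {B' : Matrix n n 𝕜} {l : 𝕜} (hv : A *ᵥ v = (c : 𝕜) • v)
    (hv1 : ‖WithLp.toLp 2 v‖ = 1) (hderiv : B' *ᵥ v + A *ᵥ v' = l • v + (c : 𝕜) • v') :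
    δ * ‖WithLp.toLp 2 (v' - (star v ⬝ᵥ v') • v)‖ ≤ ‖B'‖ := by
  set w := v' - (star v ⬝ᵥ v') • v
  have hT : (toEuclideanLin A).IsSymmetric := isSymmetric_toEuclideanLin_iff.mpr hA
  have hTv : toEuclideanLin A (WithLp.toLp 2 v) = (c : 𝕜) • WithLp.toLp 2 v := congrArg _ hv
  have hv0 : WithLp.toLp 2 v ≠ 0 := fun h => by simp [h] at hv1
  have hvw : ⟪WithLp.toLp 2 v, WithLp.toLp 2 w⟫_𝕜 = 0 := by
    rw [EuclideanSpace.inner_toLp_toLp, dotProduct_comm]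
    simp [w, dotProduct_sub, dotProduct_smul, star_dotProduct_self_eq_one hv1]
  have hAw : A *ᵥ w - (c : 𝕜) • w = l • v - B' *ᵥ v := by
    simp only [w, mulVec_sub, mulVec_smul, hv]
    linear_combination (norm := module) hderiv
  have hTw : toEuclideanLin A (WithLp.toLp 2 w) - (c : 𝕜) • WithLp.toLp 2 w =
      l • WithLp.toLp 2 v - WithLp.toLp 2 (B' *ᵥ v) := congrArg (WithLp.toLp 2) hAw
  calc δ * ‖WithLp.toLp 2 w‖
      ≤ ‖toEuclideanLin A (WithLp.toLp 2 w) - (c : 𝕜) • WithLp.toLp 2 w‖ :=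
        hT.mul_norm_le_norm_apply_sub_smul_of_inner_eq_zero hA.eigenvectorBasis
          hA.toEuclideanLin_eigenvectorBasis hδ hsimple hTv hv0 hvw
    _ ≤ ‖l • WithLp.toLp 2 v - (toEuclideanLin A (WithLp.toLp 2 w) - (c : 𝕜) • WithLp.toLp 2 w)‖ :=
        norm_le_norm_smul_sub_of_inner_eq_zero (hT.inner_apply_sub_smul_eq_zero hTv _) l
    _ = ‖WithLp.toLp 2 (B' *ᵥ v)‖ := by rw [hTw, sub_sub_cancel]
    _ ≤ ‖B'‖ * ‖WithLp.toLp 2 v‖ := l2_opNorm_mulVec B' (WithLp.toLp 2 v)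
    _ = ‖B'‖ := by rw [hv1, mul_one]

end Matrix

section Deriv

variable {𝕜 𝔸 ι m : Type*} [NontriviallyNormedField 𝕜] [NormedRing 𝔸] [NormedAlgebra 𝕜 𝔸]
  [Fintype ι] {t : 𝕜}

theorem HasDerivAt.dotProduct {u w : 𝕜 → ι → 𝔸} {u' w' : ι → 𝔸} (hu : HasDerivAt u u' t)
    (hw : HasDerivAt w w' t) :
    HasDerivAt (fun s => u s ⬝ᵥ w s) (u' ⬝ᵥ w t + u t ⬝ᵥ w') t := by
  rw [_root_.dotProduct, _root_.dotProduct, ← Finset.sum_add_distrib]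
  exact HasDerivAt.fun_sum fun i _ => (hasDerivAt_pi.1 hu i).fun_mul (hasDerivAt_pi.1 hw i)

theorem HasDerivAt.mulVec {B : 𝕜 → Matrix m ι 𝔸} {B' : Matrix m ι 𝔸} {v : 𝕜 → ι → 𝔸}
    {v' : ι → 𝔸} (hB : ∀ i j, HasDerivAt (fun s => B s i j) (B' i j) t)
    (hv : HasDerivAt v v' t) :
    HasDerivAt (fun s => B s *ᵥ v s) (B' *ᵥ v t + B t *ᵥ v') t :=
  hasDerivAt_pi.2 fun i => (hasDerivAt_pi.2 (hB i)).dotProduct hv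

end Deriv

section UnitEigenvector

variable {𝕜 n : Type*} [RCLike 𝕜] [Fintype n] {v : ℝ → n → 𝕜} {v' : n → 𝕜} {θ : ℝ}

lemma star_dotProduct_add_star_dotProduct_eq_zero (hv : HasDerivAt v v' θ)
    (hunit : ∀ t, star (v t) ⬝ᵥ v t = 1) : star v' ⬝ᵥ v θ + star (v θ) ⬝ᵥ v' = 0 :=
  (hv.star.dotProduct hv).unique <|
    (hasDerivAt_const θ (1 : 𝕜)).congr_of_eventuallyEq (.of_forall hunit)

-- `lam` need not be assumed differentiable: it is the Rayleigh quotient `⟪v, B v⟫`.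
lemma exists_mulVec_add_mulVec_eq_of_hasDerivAt {B : ℝ → Matrix n n 𝕜} {B' : Matrix n n 𝕜}
    {lam : ℝ → 𝕜} (hB : ∀ i j, HasDerivAt (fun s => B s i j) (B' i j) θ)
    (hv : HasDerivAt v v' θ) (hunit : ∀ t, star (v t) ⬝ᵥ v t = 1)
    (heig : ∀ t, B t *ᵥ v t = lam t • v t) :
    ∃ l : 𝕜, B' *ᵥ v θ + B θ *ᵥ v' = l • v θ + lam θ • v' := by
  have hBv := HasDerivAt.mulVec hB hv
  have hlam : HasDerivAt lam _ θ := (hv.star.dotProduct hBv).congr_of_eventuallyEq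
    (.of_forall fun t => by simp only [heig, dotProduct_smul, hunit, smul_eq_mul, mul_one])
  have hlamv := hlam.smul hv
  rw [add_comm] at hlamv
  exact ⟨_, hBv.unique (hlamv.congr_of_eventuallyEq (.of_forall heig))⟩

end UnitEigenvector

theorem stmt_6_general
    (n : ℕ) (δ : ℝ) (hδ : 0 < δ)
    (B B' : ℝ → Matrix (Fin n) (Fin n) ℂ)
    (v v' : ℝ → Fin n → ℂ)
    (P' : ℝ → Matrix (Fin n) (Fin n) ℂ)
    (hB : ∀ θ i j, HasDerivAt (fun t => B t i j) (B' θ i j) θ)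
    (hHerm : ∀ θ, (B θ).IsHermitian)
    (hgap : ∀ θ, δ ≤ eigsDesc (B θ) 1 - eigsDesc (B θ) 2)
    (hv : ∀ θ i, HasDerivAt (fun t => v t i) (v' θ i) θ)
    (hnorm : ∀ θ, ∑ i, ‖v θ i‖ ^ 2 = 1)
    (heig : ∀ θ, B θ *ᵥ v θ = ((eigsDesc (B θ) 1 : ℝ) : ℂ) • v θ)
    (hP' : ∀ θ i j,
      HasDerivAt (fun t => v t i * (starRingEnd ℂ) (v t j)) (P' θ i j) θ) :
    ∀ θ, ‖P' θ‖ ≤ 2 * ‖B' θ‖ / δ := by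
  intro θ
  have hA := hHerm θ
  have hunit (t : ℝ) : ‖WithLp.toLp 2 (v t)‖ = 1 := by simp [EuclideanSpace.norm_eq, hnorm t]
  have hunit' (t : ℝ) : star (v t) ⬝ᵥ v t = 1 := Matrix.star_dotProduct_self_eq_one (hunit t)
  have hvd : HasDerivAt v (v' θ) θ := hasDerivAt_pi.2 (hv θ)
  obtain ⟨l, hderiv⟩ := exists_mulVec_add_mulVec_eq_of_hasDerivAt (hB θ) hvd hunit' heig
  have hP : P' θ = vecMulVec (v' θ) (star (v θ)) + vecMulVec (v θ) (star (v' θ)) :=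
    Matrix.ext fun i j => (hP' θ i j).unique ((hv θ i).mul (hv θ j).star)
  have hsimple (i j : Fin n) (hi : eigsDesc (B θ) 1 - δ < hA.eigenvalues i)
      (hj : eigsDesc (B θ) 1 - δ < hA.eigenvalues j) : i = j := by
    have hlam₂ : eigsDesc (B θ) 2 = nthLargest hA.eigenvalues 2 := dif_pos hA
    exact eq_of_nthLargest_two_lt _ (by linarith [hgap θ]) (by linarith [hgap θ])
  calc ‖P' θ‖ ≤ 2 * ‖WithLp.toLp 2 (v' θ - (star (v θ) ⬝ᵥ v' θ) • v θ)‖ :=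
        hP ▸ Matrix.l2_opNorm_vecMulVec_add_vecMulVec_le (hunit θ)
          (star_dotProduct_add_star_dotProduct_eq_zero hvd hunit')
    _ ≤ 2 * ‖B' θ‖ / δ := by
        rw [mul_div_assoc]
        gcongr
        rw [le_div_iff₀ hδ, mul_comm]
        exact hA.mul_norm_sub_smul_le_l2_opNorm hδ hsimple (heig θ) (hunit θ) hderiv

/-- First-derivative bound for the leading eigenprojection `P(θ) = v(θ)v(θ)*` of a differentiable
Hermitian family with uniform spectral gap `δ` between the two largest eigenvalues:
`‖P′(θ)‖ ≤ 2‖B′(θ)‖/δ` in operator norm. -/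
theorem stmt_6
    (n : ℕ) (hn : 2 ≤ n) (δ : ℝ) (hδ : 0 < δ)
    (B B' : ℝ → Matrix (Fin n) (Fin n) ℂ)
    (v v' : ℝ → Fin n → ℂ)
    (P' : ℝ → Matrix (Fin n) (Fin n) ℂ)
    (hB : ∀ θ i j, HasDerivAt (fun t => B t i j) (B' θ i j) θ)
    (hHerm : ∀ θ, (B θ).IsHermitian)
    (hgap : ∀ θ, δ ≤ eigsDesc (B θ) 1 - eigsDesc (B θ) 2)
    (hv : ∀ θ i, HasDerivAt (fun t => v t i) (v' θ i) θ)
    (hnorm : ∀ θ, ∑ i, ‖v θ i‖ ^ 2 = 1)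
    (heig : ∀ θ, B θ *ᵥ v θ = ((eigsDesc (B θ) 1 : ℝ) : ℂ) • v θ)
    (hP' : ∀ θ i j,
      HasDerivAt (fun t => v t i * (starRingEnd ℂ) (v t j)) (P' θ i j) θ) :
    ∀ θ, ‖P' θ‖ ≤ 2 * ‖B' θ‖ / δ :=
  stmt_6_general n δ hδ B B' v v' P' hB hHerm hgap hv hnorm heig hP'
end

section
/- Fix ρ > 0 and a ∈ (0, 2). There exists a constant C = C(ρ, a) such that for every integer T ≥ 2 and every real B > 0 with BT ≥ 2, setting T₀ = ⌊(T−1)/2⌋, λ_s = 2πs/T, and for θ ∈ [−π, π] the index set M(θ, B) = { s ∈ ℤ : s ≠ 0, |s| ≤ T₀, λ_s ∈ (θ − ρB, θ + ρB) }, the following hold: (1) if |θ| > 2ρB then Σ_{s ∈ M(θ,B)} |λ_s|^{−a} ≤ C·B·T·|θ|^{−a}; (2) if |θ| ≤ 2ρB then Σ_{s ∈ M(θ,B)} |λ_s|^{−a} ≤ C·T·B^{1−a} when 0 < a < 1, Σ_{s ∈ M(θ,B)} |λ_s|^{−1} ≤ C·T·log(BT) when a = 1, and Σ_{s ∈ M(θ,B)}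 |λ_s|^{−a} ≤ C·T^{a} when 1 < a < 2. -/
/-!
Write `λ_s = 2πs/T`. Away from zero (`|θ| > 2ρB`) every `λ_s` in the window has `|λ_s| ≥ |θ|/2`,
and the window contains at most `ρBT/π + 1 = O(BT)` integers `s`. Near zero the window lies in
`|λ_s| < 3ρB`, i.e. `0 < |s| ≤ N = O(BT)`, so the sum is at most `2 T^a ∑_{k ≤ N} k^{-a}`; this
partial sum of the `p`-series is `O(N^{1-a})`, `O(log N)` or `O(1)` according as `a < 1`, `a = 1`
or `a > 1`.
-/

open Finset Real

lemma card_le_sub_add_one_of_forall_mem_Icc {M : Finset ℤ} {x y : ℝ} (hxy : x ≤ y)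
    (hM : ∀ s ∈ M, x ≤ s ∧ (s : ℝ) ≤ y) : (#M : ℝ) ≤ y - x + 1 := by
  have hsub : M ⊆ Icc ⌈x⌉ ⌊y⌋ := fun s hs =>
    mem_Icc.2 ⟨Int.ceil_le.2 (hM s hs).1, Int.le_floor.2 (hM s hs).2⟩
  have hnonneg : 0 ≤ ⌊y⌋ + 1 - ⌈x⌉ := by
    have : (⌈x⌉ : ℝ) < ⌊y⌋ + 2 := by linarith [Int.ceil_lt_add_one x, Int.lt_floor_add_one y]
    have : ⌈x⌉ < ⌊y⌋ + 2 := by exact_mod_cast this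
    omega
  calc (#M : ℝ) ≤ #(Icc ⌈x⌉ ⌊y⌋) := by exact_mod_cast card_le_card hsub
    _ = ((⌊y⌋ + 1 - ⌈x⌉ : ℤ) : ℝ) := by
      rw [Int.card_Icc]; exact_mod_cast Int.toNat_of_nonneg hnonneg
    _ ≤ y - x + 1 := by push_cast; linarith [Int.floor_le y, Int.le_ceil x]

lemma card_le_of_forall_abs_freq_sub_lt {T : ℕ} (hT : 0 < T) {θ r : ℝ} (hr : 0 ≤ r)
    {M : Finset ℤ} (hM : ∀ s ∈ M, |2 * π * s / T - θ| < r) : (#M : ℝ) ≤ r * T / π + 1 := by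
  have hT' : (0 : ℝ) < T := by exact_mod_cast hT
  have hcard := card_le_sub_add_one_of_forall_mem_Icc (M := M)
    (x := (θ - r) * T / (2 * π)) (y := (θ + r) * T / (2 * π)) (by gcongr; linarith) fun s hs => by
      obtain ⟨hl, hr⟩ := abs_lt.1 (hM s hs)
      have hs : (s : ℝ) = 2 * π * s / T * T / (2 * π) := by field_simp
      rw [hs]
      constructor <;> gcongr <;> linarith
  exact hcard.trans_eq (by field_simp; ring)

lemma abs_rpow_neg_le_of_two_mul_abs_sub_lt {x θ a : ℝ} (ha : 0 ≤ a) (h : 2 * |x - θ| < |θ|) :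
    |x| ^ (-a) ≤ 2 ^ a * |θ| ^ (-a) := by
  have hθx : |θ| / 2 ≤ |x| := by linarith [abs_sub_abs_le_abs_sub θ x, abs_sub_comm x θ]
  calc |x| ^ (-a) ≤ (|θ| / 2) ^ (-a) :=
        rpow_le_rpow_of_nonpos (by linarith [abs_nonneg (x - θ)]) hθx (by linarith)
    _ = 2 ^ a * |θ| ^ (-a) := by
      rw [div_rpow (abs_nonneg θ) zero_le_two, rpow_neg zero_le_two, div_eq_mul_inv, inv_inv,
        mul_comm]

lemma sum_abs_freq_rpow_neg_le_of_far {T : ℕ} (hT : 0 < T) {θ r a : ℝ} (hr : 0 ≤ r)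
    (ha : 0 ≤ a) (hθ : 2 * r < |θ|) {M : Finset ℤ} (hM : ∀ s ∈ M, |2 * π * s / T - θ| < r) :
    ∑ s ∈ M, |2 * π * s / T| ^ (-a) ≤ (r * T / π + 1) * (2 ^ a * |θ| ^ (-a)) :=
  calc ∑ s ∈ M, |2 * π * s / T| ^ (-a) ≤ #M • (2 ^ a * |θ| ^ (-a)) :=
        sum_le_card_nsmul _ _ _ fun s hs =>
          abs_rpow_neg_le_of_two_mul_abs_sub_lt ha (by linarith [hM s hs])
    _ ≤ (r * T / π + 1) * (2 ^ a * |θ| ^ (-a)) := by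
      rw [nsmul_eq_mul]; gcongr; exact card_le_of_forall_abs_freq_sub_lt hT hr hM

lemma sum_comp_natAbs_le_two_mul_sum_Icc {M : Finset ℤ} {N : ℕ} {g : ℕ → ℝ}
    (hg : ∀ k, 0 ≤ g k) (hM : ∀ s ∈ M, s ≠ 0 ∧ |s| ≤ N) :
    ∑ s ∈ M, g s.natAbs ≤ 2 * ∑ k ∈ Icc 1 N, g k := by
  have hfiber : ∀ k : ℕ, #{s ∈ M | s.natAbs = k} ≤ 2 := fun k =>
    (card_le_card (t := {(k : ℤ), -(k : ℤ)}) fun s hs => by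
      rw [mem_filter] at hs
      rcases Int.natAbs_eq s with h | h <;> rw [h, hs.2] <;> simp).trans card_le_two
  have himage : M.image Int.natAbs ⊆ Icc 1 N := by
    intro k hk
    obtain ⟨s, hs, rfl⟩ := mem_image.1 hk
    obtain ⟨hs0, hsN⟩ := hM s hs
    rw [abs_le] at hsN
    rw [mem_Icc]
    omega
  rw [sum_comp, mul_sum]
  calc ∑ k ∈ M.image Int.natAbs, #{s ∈ M | s.natAbs = k} • g k
      ≤ ∑ k ∈ M.image Int.natAbs, 2 * g k :=
        sum_le_sum fun k _ => by
          rw [nsmul_eq_mul]; exact mul_le_mul_of_nonneg_right (by exact_mod_cast hfiber k) (hg k)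
    _ ≤ ∑ k ∈ Icc 1 N, 2 * g k :=
        sum_le_sum_of_subset_of_nonneg himage fun k _ _ => by linarith [hg k]

lemma abs_freq_rpow_neg_le {T : ℕ} (hT : 0 < T) {a : ℝ} (ha : 0 ≤ a) (s : ℤ) :
    |2 * π * s / T| ^ (-a) ≤ T ^ a * (s.natAbs : ℝ) ^ (-a) := by
  have hT' : (0 : ℝ) < T := by exact_mod_cast hT
  have habs : |2 * π * s / T| = 2 * π / T * s.natAbs := by
    rw [Nat.cast_natAbs, Int.cast_abs, abs_div, abs_mul, abs_of_pos two_pi_pos, abs_of_pos hT']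
    ring
  rw [habs, mul_rpow (by positivity) (by positivity)]
  gcongr
  calc (2 * π / T) ^ (-a) ≤ (1 / T) ^ (-a) :=
        rpow_le_rpow_of_nonpos (by positivity) (by gcongr; linarith [pi_gt_three]) (by linarith)
    _ = T ^ a := by rw [one_div, inv_rpow hT'.le, ← rpow_neg hT'.le, neg_neg]

lemma sum_abs_freq_rpow_neg_le_of_abs_le {T N : ℕ} (hT : 0 < T) {a : ℝ} (ha : 0 ≤ a)
    {M : Finset ℤ} (hM : ∀ s ∈ M, s ≠ 0 ∧ |s| ≤ N) :
    ∑ s ∈ M, |2 * π * s / T| ^ (-a) ≤ 2 * T ^ a * ∑ k ∈ Icc 1 N, (k : ℝ) ^ (-a) :=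
  calc ∑ s ∈ M, |2 * π * s / T| ^ (-a) ≤ ∑ s ∈ M, T ^ a * (s.natAbs : ℝ) ^ (-a) :=
        sum_le_sum fun s _ => abs_freq_rpow_neg_le hT ha s
    _ = T ^ a * ∑ s ∈ M, (s.natAbs : ℝ) ^ (-a) := (mul_sum ..).symm
    _ ≤ T ^ a * (2 * ∑ k ∈ Icc 1 N, (k : ℝ) ^ (-a)) := by
      gcongr
      exact sum_comp_natAbs_le_two_mul_sum_Icc (g := fun k : ℕ => (k : ℝ) ^ (-a))
        (fun k => by positivity) hM
    _ = 2 * T ^ a * ∑ k ∈ Icc 1 N, (k : ℝ) ^ (-a) := by ring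

lemma abs_le_ceil_of_abs_freq_lt {T : ℕ} (hT : 0 < T) {R : ℝ} {s : ℤ}
    (h : |2 * π * s / T| < R) : |s| ≤ ⌈R * T / (2 * π)⌉₊ := by
  have hT' : (0 : ℝ) < T := by exact_mod_cast hT
  have hs : (|s| : ℝ) ≤ R * T / (2 * π) := by
    rw [abs_div, abs_mul, abs_of_pos two_pi_pos, abs_of_pos hT', div_lt_iff₀ hT'] at h
    rw [le_div_iff₀ two_pi_pos]
    linarith
  exact_mod_cast hs.trans (Nat.le_ceil _)

lemma mul_add_one_rpow_sub_one_le {p x : ℝ} (hp0 : 0 ≤ p) (hp1 : p ≤ 1) (hx : 0 ≤ x) :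
    p * (x + 1) ^ (p - 1) ≤ (x + 1) ^ p - x ^ p := by
  have hx1 : 0 < x + 1 := by linarith
  have hbern := rpow_one_add_le_one_add_mul_self (s := -(x + 1)⁻¹)
    (by rw [neg_le_neg_iff]; exact inv_le_one_of_one_le₀ (by linarith)) hp0 hp1
  have hfrac : 1 + -(x + 1)⁻¹ = x / (x + 1) := by field_simp; ring
  rw [hfrac, div_rpow hx hx1.le, div_le_iff₀ (rpow_pos_of_pos hx1 p)] at hbern
  rw [rpow_sub_one hx1.ne', div_eq_mul_inv]
  linear_combination hbern

lemma sum_Icc_rpow_neg_le_of_lt_one {a : ℝ} (ha0 : 0 ≤ a) (ha1 : a < 1) (N : ℕ) :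
    ∑ k ∈ Icc 1 N, (k : ℝ) ^ (-a) ≤ N ^ (1 - a) / (1 - a) := by
  have h1a : 0 < 1 - a := by linarith
  induction N with
  | zero => simp [zero_rpow h1a.ne']
  | succ n ih =>
    have hstep := mul_add_one_rpow_sub_one_le h1a.le (by linarith) n.cast_nonneg
    rw [sub_sub_cancel_left] at hstep
    rw [sum_Icc_succ_top (by omega), Nat.cast_succ]
    rw [le_div_iff₀ h1a] at ih ⊢
    linarith

lemma sum_Icc_rpow_neg_one_le (N : ℕ) : ∑ k ∈ Icc 1 N, (k : ℝ) ^ (-1 : ℝ) ≤ 1 + log N := by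
  simpa [rpow_neg_one, harmonic_eq_sum_Icc] using harmonic_le_one_add_log N

lemma log_mul_le_mul_log {k X : ℝ} (hk : 0 < k) (hX : 2 ≤ X) :
    log (k * X) ≤ (|log k| / log 2 + 1) * log X := by
  have hlog2 : 0 < log 2 := log_pos one_lt_two
  have hlogX : log 2 ≤ log X := log_le_log two_pos hX
  have habs : |log k| ≤ |log k| / log 2 * log X := by
    rw [div_mul_eq_mul_div, le_div_iff₀ hlog2]
    gcongr
  rw [log_mul hk.ne' (by linarith), add_mul, one_mul]
  linarith [le_abs_self (log k)]

section Window

variable {ρ a B θ : ℝ} {T : ℕ} {M : Finset ℤ}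

lemma sum_window_le_of_far (hρ : 0 < ρ) (ha : 0 ≤ a) (hT : 0 < T) (hB : 0 < B)
    (hBT : 2 ≤ B * T) (hθ : 2 * ρ * B < |θ|) (hM : ∀ s ∈ M, |2 * π * s / T - θ| < ρ * B) :
    ∑ s ∈ M, |2 * π * s / T| ^ (-a) ≤ 2 ^ a * (ρ / π + 1 / 2) * B * T * |θ| ^ (-a) :=
  calc ∑ s ∈ M, |2 * π * s / T| ^ (-a) ≤ (ρ * B * T / π + 1) * (2 ^ a * |θ| ^ (-a)) :=
        sum_abs_freq_rpow_neg_le_of_far hT (by positivity) ha (by linarith) hM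
    _ ≤ (ρ / π + 1 / 2) * (B * T) * (2 ^ a * |θ| ^ (-a)) := by
      gcongr ?_ * _
      linarith [show ρ * B * T / π = ρ / π * (B * T) by ring]
    _ = 2 ^ a * (ρ / π + 1 / 2) * B * T * |θ| ^ (-a) := by ring

lemma exists_sum_window_le_of_near (hρ : 0 < ρ) (ha : 0 ≤ a) (hT : 0 < T) (hB : 0 < B)
    (hBT : 2 ≤ B * T) (hθ : |θ| ≤ 2 * ρ * B)
    (hM : ∀ s ∈ M, s ≠ 0 ∧ |2 * π * s / T - θ| < ρ * B) :
    ∃ N : ℕ, 0 < N ∧ (N : ℝ) ≤ (3 * ρ / (2 * π) + 1 / 2) * (B * T) ∧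
      ∑ s ∈ M, |2 * π * s / T| ^ (-a) ≤ 2 * T ^ a * ∑ k ∈ Icc 1 N, (k : ℝ) ^ (-a) := by
  refine ⟨⌈3 * ρ * B * T / (2 * π)⌉₊, Nat.ceil_pos.2 (by positivity), ?_,
    sum_abs_freq_rpow_neg_le_of_abs_le hT ha fun s hs =>
      ⟨(hM s hs).1, abs_le_ceil_of_abs_freq_lt hT ?_⟩⟩
  · have hceil := Nat.ceil_lt_add_one (by positivity : 0 ≤ 3 * ρ * B * T / (2 * π))
    linarith [show 3 * ρ * B * T / (2 * π) = 3 * ρ / (2 * π) * (B * T) by ring]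
  · linarith [(hM s hs).2, abs_sub_abs_le_abs_sub (2 * π * s / T) θ]

lemma sum_window_le_of_near_of_lt_one (hρ : 0 < ρ) (ha0 : 0 ≤ a) (ha1 : a < 1) (hT : 0 < T)
    (hB : 0 < B) (hBT : 2 ≤ B * T) (hθ : |θ| ≤ 2 * ρ * B)
    (hM : ∀ s ∈ M, s ≠ 0 ∧ |2 * π * s / T - θ| < ρ * B) :
    ∑ s ∈ M, |2 * π * s / T| ^ (-a) ≤
      2 * (3 * ρ / (2 * π) + 1 / 2) ^ (1 - a) / (1 - a) * T * B ^ (1 - a) := by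
  obtain ⟨N, -, hN, hsum⟩ := exists_sum_window_le_of_near hρ ha0 hT hB hBT hθ hM
  set c := 3 * ρ / (2 * π) + 1 / 2
  have hT' : (0 : ℝ) < T := by exact_mod_cast hT
  have hTT : (T : ℝ) ^ a * (T : ℝ) ^ (1 - a) = T := by
    rw [← rpow_add hT', add_sub_cancel, rpow_one]
  calc ∑ s ∈ M, |2 * π * s / T| ^ (-a) ≤ 2 * T ^ a * (N ^ (1 - a) / (1 - a)) :=
        hsum.trans (by gcongr; exact sum_Icc_rpow_neg_le_of_lt_one ha0 ha1 N)
    _ ≤ 2 * T ^ a * ((c * (B * T)) ^ (1 - a) / (1 - a)) := by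
      have : 0 < 1 - a := by linarith
      gcongr
    _ = 2 * c ^ (1 - a) / (1 - a) * (T ^ a * T ^ (1 - a)) * B ^ (1 - a) := by
      rw [mul_rpow (by positivity) (by positivity), mul_rpow hB.le hT'.le]
      ring
    _ = 2 * c ^ (1 - a) / (1 - a) * T * B ^ (1 - a) := by rw [hTT]

lemma sum_window_le_of_near_one (hρ : 0 < ρ) (hT : 0 < T) (hB : 0 < B) (hBT : 2 ≤ B * T)
    (hθ : |θ| ≤ 2 * ρ * B) (hM : ∀ s ∈ M, s ≠ 0 ∧ |2 * π * s / T - θ| < ρ * B) :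
    ∑ s ∈ M, |2 * π * s / T| ^ (-1 : ℝ) ≤
      2 * (|log (exp 1 * (3 * ρ / (2 * π) + 1 / 2))| / log 2 + 1) * T * log (B * T) := by
  obtain ⟨N, hN0, hN, hsum⟩ := exists_sum_window_le_of_near hρ zero_le_one hT hB hBT hθ hM
  set c := 3 * ρ / (2 * π) + 1 / 2
  have hlogN : 1 + log N ≤ log (exp 1 * c * (B * T)) := by
    rw [mul_assoc, log_mul (exp_pos 1).ne' (by positivity), log_exp]
    gcongr
  calc ∑ s ∈ M, |2 * π * s / T| ^ (-1 : ℝ) ≤ 2 * T ^ (1 : ℝ) * (1 + log N) :=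
        hsum.trans (by gcongr; exact sum_Icc_rpow_neg_one_le N)
    _ ≤ 2 * T * ((|log (exp 1 * c)| / log 2 + 1) * log (B * T)) := by
      rw [rpow_one]
      gcongr
      exact hlogN.trans (log_mul_le_mul_log (by positivity) hBT)
    _ = 2 * (|log (exp 1 * c)| / log 2 + 1) * T * log (B * T) := by ring

lemma sum_window_le_of_near_of_one_lt (hρ : 0 < ρ) (ha : 1 < a) (hT : 0 < T) (hB : 0 < B)
    (hBT : 2 ≤ B * T) (hθ : |θ| ≤ 2 * ρ * B)
    (hM : ∀ s ∈ M, s ≠ 0 ∧ |2 * π * s / T - θ| < ρ * B) :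
    ∑ s ∈ M, |2 * π * s / T| ^ (-a) ≤ 2 * (∑' k : ℕ, (k : ℝ) ^ (-a)) * T ^ a := by
  obtain ⟨N, -, -, hsum⟩ := exists_sum_window_le_of_near (a := a) hρ (by linarith) hT hB hBT hθ hM
  calc ∑ s ∈ M, |2 * π * s / T| ^ (-a) ≤ 2 * T ^ a * ∑' k : ℕ, (k : ℝ) ^ (-a) := by
        refine hsum.trans ?_
        gcongr
        exact (summable_nat_rpow.2 (by linarith)).sum_le_tsum _ fun k _ => by positivity
    _ = 2 * (∑' k : ℕ, (k : ℝ) ^ (-a)) * T ^ a := by ring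

end Window

/-- Summation of negative powers of Fourier frequencies over the bandwidth window
`M(θ, B) = {s ≠ 0 : |s| ≤ T₀, λ_s ∈ (θ − ρB, θ + ρB)}` around a target frequency `θ`. -/
theorem stmt_14
    (ρ a : ℝ) (hρ : 0 < ρ) (ha : a ∈ Set.Ioo (0 : ℝ) 2) :
    ∃ C : ℝ, ∀ T : ℕ, 2 ≤ T → ∀ B : ℝ, 0 < B → 2 ≤ B * T → ∀ θ ∈ Set.Icc (-π) π,
      let T₀ : ℤ := (((T - 1) / 2 : ℕ) : ℤ)
      let M : Finset ℤ := (Finset.Icc (-T₀) T₀).filter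
        (fun s : ℤ => s ≠ 0 ∧ θ - ρ * B < 2 * π * (s : ℝ) / (T : ℝ) ∧
          2 * π * (s : ℝ) / (T : ℝ) < θ + ρ * B)
      (2 * ρ * B < |θ| →
        ∑ s ∈ M, |2 * π * (s : ℝ) / (T : ℝ)| ^ (-a) ≤ C * B * T * |θ| ^ (-a)) ∧
      (|θ| ≤ 2 * ρ * B →
        ((a < 1 → ∑ s ∈ M, |2 * π * (s : ℝ) / (T : ℝ)| ^ (-a) ≤ C * T * B ^ (1 - a)) ∧
         (a = 1 → ∑ s ∈ M, |2 * π * (s : ℝ) / (T : ℝ)| ^ (-a) ≤ C * T * Real.log (B * T)) ∧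
         (1 < a → ∑ s ∈ M, |2 * π * (s : ℝ) / (T : ℝ)| ^ (-a) ≤ C * (T : ℝ) ^ a))) := by
  obtain ⟨ha0, -⟩ := ha
  set c := 3 * ρ / (2 * π) + 1 / 2
  set C₁ := 2 ^ a * (ρ / π + 1 / 2)
  set C₂ := 2 * c ^ (1 - a) / (1 - a)
  set C₃ := 2 * (|log (exp 1 * c)| / log 2 + 1)
  set C₄ := 2 * (∑' k : ℕ, (k : ℝ) ^ (-a))
  refine ⟨max (max C₁ C₂) (max C₃ C₄), fun T hT B hB hBT θ _ => ?_⟩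
  intro T₀ M
  have hT : 0 < T := by omega
  have hM : ∀ s ∈ M, s ≠ 0 ∧ |2 * π * s / T - θ| < ρ * B := fun s hs =>
    have ⟨hs0, hl, hr⟩ := (mem_filter.1 hs).2
    ⟨hs0, abs_lt.2 ⟨by linarith, by linarith⟩⟩
  refine ⟨fun hfar => ?_, fun hnear => ⟨fun ha1 => ?_, fun ha1 => ?_, fun ha1 => ?_⟩⟩
  · refine (sum_window_le_of_far hρ ha0.le hT hB hBT hfar fun s hs => (hM s hs).2).trans ?_
    gcongr
    exact le_max_of_le_left (le_max_left _ _)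
  · refine (sum_window_le_of_near_of_lt_one hρ ha0.le ha1 hT hB hBT hnear hM).trans ?_
    gcongr
    exact le_max_of_le_left (le_max_right _ _)
  · subst ha1
    refine (sum_window_le_of_near_one hρ hT hB hBT hnear hM).trans ?_
    gcongr
    · exact log_nonneg (by linarith)
    · exact le_max_of_le_right (le_max_left _ _)
  · refine (sum_window_le_of_near_of_one_lt hρ ha1 hT hB hBT hnear hM).trans ?_
    gcongr
    exact le_max_of_le_right (le_max_right _ _)
end

section
/- Fix ρ > 0, real numbers q and p with 0 ≤ q ≤ 1 and 1 + q < p < 2, and let W : ℝ → [0, ∞) satisfy W(x) = 0 for |x| > ρ and ∫_ℝ W(x) dx = 1. There exists a constant C = C(p, q, ρ) such that for every integer T ≥ 2 and every real B > 0, setting T₀ = ⌊(T−1)/2⌋ and λ_s = 2πs/T: (1/(B·T²)) · ∫_{−π}^{π} |θ|^{q} · Σ_{s = −T₀, s ≠ 0}^{T₀} W((θ − λ_s)/B) · |λ_s|^{−p} dθ ≤ C·(T^{p−q−2} + B^{q}·T^{p−2}). -/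
open MeasureTheory
open scoped Real

lemma stmt15_rpow_add_le {x y q : ℝ} (hx : 0 ≤ x) (hy : 0 ≤ y) (hq0 : 0 ≤ q) (hq1 : q ≤ 1) :
    (x + y) ^ q ≤ x ^ q + y ^ q := by
  have h := NNReal.rpow_add_le_add_rpow x.toNNReal y.toNNReal hq0 hq1
  have h2 := NNReal.coe_le_coe.2 h
  push_cast [NNReal.coe_rpow] at h2
  rwa [Real.coe_toNNReal x hx, Real.coe_toNNReal y hy] at h2

lemma stmt15_Wshift_int (W : ℝ → ℝ) (hW : Integrable W) (hWi : (∫ x : ℝ, W x) = 1)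
    (B lam : ℝ) (hB : 0 < B) :
    (∫ θ : ℝ, W ((θ - lam) / B)) = B := by
  have h2 : (∫ θ : ℝ, W ((θ - lam) / B)) = ∫ x : ℝ, W (x / B) :=
    integral_sub_right_eq_self (fun x => W (x / B)) lam
  rw [h2, MeasureTheory.Measure.integral_comp_div W B, hWi, abs_of_pos hB, smul_eq_mul, mul_one]

lemma stmt15_per_s (ρ q : ℝ) (hρ : 0 < ρ) (hq0 : 0 ≤ q) (hq1 : q ≤ 1)
    (W : ℝ → ℝ) (hW0 : ∀ x, 0 ≤ W x) (hWsupp : ∀ x, ρ < |x| → W x = 0)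
    (hWi : (∫ x : ℝ, W x) = 1) (hW : Integrable W)
    (B lam c : ℝ) (hB : 0 < B) (hc : 0 ≤ c) :
    (∫ θ in (-π)..π, |θ| ^ q * (W ((θ - lam) / B) * c))
      ≤ (|lam| ^ q + (ρ * B) ^ q) * c * B := by
  set K : ℝ := |lam| ^ q + (ρ * B) ^ q with hKdef
  have hK : 0 ≤ K := by positivity
  have hg : Integrable (fun θ : ℝ => W ((θ - lam) / B)) :=
    (hW.comp_div hB.ne').comp_sub_right lam
  have hgI : IntervalIntegrable (fun θ : ℝ => W ((θ - lam) / B)) volume (-π) π :=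
    hg.intervalIntegrable
  have hcont : Continuous fun θ : ℝ => |θ| ^ q :=
    continuous_abs.rpow_const (fun x => Or.inr hq0)
  have hfI : IntervalIntegrable (fun θ : ℝ => |θ| ^ q * (W ((θ - lam) / B) * c))
      volume (-π) π := (hgI.mul_const c).continuousOn_mul hcont.continuousOn
  have hptwise : ∀ θ : ℝ, |θ| ^ q * (W ((θ - lam) / B) * c)
      ≤ (K * c) * W ((θ - lam) / B) := by
    intro θ
    by_cases h : ρ < |(θ - lam) / B|
    · rw [hWsupp _ h]; simp
    · push_neg at h
      have h1 : |θ - lam| ≤ ρ * B := by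
        rw [abs_div, abs_of_pos hB, div_le_iff₀ hB] at h
        linarith [h]
      have h2 : |θ| ≤ |lam| + ρ * B := by
        have : |θ| ≤ |lam| + |θ - lam| := by
          have := abs_add_le lam (θ - lam)
          simpa using this
        linarith
      have h3 : |θ| ^ q ≤ K :=
        le_trans (Real.rpow_le_rpow (abs_nonneg θ) h2 hq0)
          (stmt15_rpow_add_le (abs_nonneg lam) (by positivity) hq0 hq1)
      calc |θ| ^ q * (W ((θ - lam) / B) * c)
          ≤ K * (W ((θ - lam) / B) * c) :=
            mul_le_mul_of_nonneg_right h3 (mul_nonneg (hW0 _) hc)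
        _ = (K * c) * W ((θ - lam) / B) := by ring
  have hmono : (∫ θ in (-π)..π, |θ| ^ q * (W ((θ - lam) / B) * c))
      ≤ ∫ θ in (-π)..π, (K * c) * W ((θ - lam) / B) := by
    apply intervalIntegral.integral_mono_on (by linarith [Real.pi_pos]) hfI
      (hgI.const_mul (K * c))
    intro x _; exact hptwise x
  have hWB : (∫ θ in (-π)..π, W ((θ - lam) / B)) ≤ B := by
    rw [intervalIntegral.integral_of_le (by linarith [Real.pi_pos])]
    calc (∫ θ in Set.Ioc (-π) π, W ((θ - lam) / B))
        ≤ ∫ θ : ℝ, W ((θ - lam) / B) :=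
          setIntegral_le_integral hg (ae_of_all _ fun x => hW0 _)
      _ = B := stmt15_Wshift_int W hW hWi B lam hB
  calc (∫ θ in (-π)..π, |θ| ^ q * (W ((θ - lam) / B) * c))
      ≤ ∫ θ in (-π)..π, (K * c) * W ((θ - lam) / B) := hmono
    _ = (K * c) * ∫ θ in (-π)..π, W ((θ - lam) / B) :=
        intervalIntegral.integral_const_mul _ _
    _ ≤ (K * c) * B := mul_le_mul_of_nonneg_left hWB (by positivity)
    _ = K * c * B := by ring

/-- Weighted sum–integral bound for the smoothing kernel against negative powers of the Fourier
frequencies: `(1/(BT²)) ∫ |θ|^q Σ_{s≠0} W((θ−λ_s)/B)|λ_s|^{−p} dθ ≲ T^{p−q−2} + B^q T^{p−2}`. -/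
theorem stmt_15
    (ρ q p : ℝ) (hρ : 0 < ρ) (hq0 : 0 ≤ q) (hq1 : q ≤ 1)
    (hp1 : 1 + q < p) (hp2 : p < 2) :
    ∃ C : ℝ, ∀ W : ℝ → ℝ,
      (∀ x, 0 ≤ W x) → (∀ x, ρ < |x| → W x = 0) → (∫ x : ℝ, W x) = 1 →
      ∀ T : ℕ, 2 ≤ T → ∀ B : ℝ, 0 < B →
        let T₀ : ℤ := (((T - 1) / 2 : ℕ) : ℤ)
        (1 / (B * (T : ℝ) ^ 2)) *
            (∫ θ in (-π)..π, |θ| ^ q *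
              ∑ s ∈ (Finset.Icc (-T₀) T₀).filter (fun s : ℤ => s ≠ 0),
                W ((θ - 2 * π * (s : ℝ) / (T : ℝ)) / B) * |2 * π * (s : ℝ) / (T : ℝ)| ^ (-p))
          ≤ C * ((T : ℝ) ^ (p - q - 2) + B ^ q * (T : ℝ) ^ (p - 2)) := by
  have hπ : (0:ℝ) < π := Real.pi_pos
  have h2π : (0:ℝ) < 2 * π := by linarith
  have hsum1 : Summable fun s : ℤ => |(s : ℝ)| ^ (q - p) := by
    have h := Real.summable_abs_int_rpow (b := p - q) (by linarith)
    simpa [neg_sub] using h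
  have hsum2 : Summable fun s : ℤ => |(s : ℝ)| ^ (-p) :=
    Real.summable_abs_int_rpow (by linarith)
  set Z₁ : ℝ := ∑' s : ℤ, |(s : ℝ)| ^ (q - p) with hZ₁
  set Z₂ : ℝ := ∑' s : ℤ, |(s : ℝ)| ^ (-p) with hZ₂
  have hZ₁0 : 0 ≤ Z₁ := tsum_nonneg fun s => Real.rpow_nonneg (abs_nonneg _) _
  have hZ₂0 : 0 ≤ Z₂ := tsum_nonneg fun s => Real.rpow_nonneg (abs_nonneg _) _
  refine ⟨(2 * π) ^ (q - p) * Z₁ + ρ ^ q * (2 * π) ^ (-p) * Z₂, ?_⟩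
  intro W hW0 hWsupp hWi T hT B hB T₀
  have hW : Integrable W := by
    by_contra hc
    rw [integral_undef hc] at hWi
    exact one_ne_zero hWi.symm
  have hT0 : (0:ℝ) < T := by exact_mod_cast Nat.pos_of_ne_zero (by omega)
  set F := (Finset.Icc (-T₀) T₀).filter (fun s : ℤ => s ≠ 0) with hF
  set lam : ℤ → ℝ := fun s => 2 * π * (s : ℝ) / (T : ℝ) with hlam
  have hc0 : ∀ s : ℤ, 0 ≤ |lam s| ^ (-p) := fun s => Real.rpow_nonneg (abs_nonneg _) _
  have hintg : ∀ s ∈ F, IntervalIntegrable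
      (fun θ : ℝ => |θ| ^ q * (W ((θ - lam s) / B) * |lam s| ^ (-p))) volume (-π) π := by
    intro s _
    have hg : Integrable (fun θ : ℝ => W ((θ - lam s) / B)) :=
      (hW.comp_div hB.ne').comp_sub_right (lam s)
    have hcont : Continuous fun θ : ℝ => |θ| ^ q :=
      continuous_abs.rpow_const (fun x => Or.inr hq0)
    exact (hg.intervalIntegrable.mul_const _).continuousOn_mul hcont.continuousOn
  have hInt : (∫ θ in (-π)..π, |θ| ^ q *
        ∑ s ∈ F, W ((θ - 2 * π * (s : ℝ) / (T : ℝ)) / B) * |2 * π * (s : ℝ) / (T : ℝ)| ^ (-p))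
      = ∑ s ∈ F, ∫ θ in (-π)..π, |θ| ^ q * (W ((θ - lam s) / B) * |lam s| ^ (-p)) := by
    simp only [Finset.mul_sum]
    exact intervalIntegral.integral_finset_sum hintg
  have hstepB : ∀ s ∈ F, (∫ θ in (-π)..π, |θ| ^ q * (W ((θ - lam s) / B) * |lam s| ^ (-p)))
      ≤ B * |lam s| ^ (q - p) + (B * (ρ * B) ^ q) * |lam s| ^ (-p) := by
    intro s hs
    have hs0 : s ≠ 0 := (Finset.mem_filter.1 hs).2
    have habs : 0 < |lam s| := by
      rw [abs_pos, hlam]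
      exact div_ne_zero (mul_ne_zero (by positivity) (Int.cast_ne_zero.2 hs0)) hT0.ne'
    have hqp : |lam s| ^ q * |lam s| ^ (-p) = |lam s| ^ (q - p) := by
      rw [← Real.rpow_add habs]; ring_nf
    calc (∫ θ in (-π)..π, |θ| ^ q * (W ((θ - lam s) / B) * |lam s| ^ (-p)))
        ≤ (|lam s| ^ q + (ρ * B) ^ q) * |lam s| ^ (-p) * B :=
          stmt15_per_s ρ q hρ hq0 hq1 W hW0 hWsupp hWi hW B (lam s) _ hB (hc0 s)
      _ = B * (|lam s| ^ q * |lam s| ^ (-p)) + (B * (ρ * B) ^ q) * |lam s| ^ (-p) := by ring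
      _ = B * |lam s| ^ (q - p) + (B * (ρ * B) ^ q) * |lam s| ^ (-p) := by rw [hqp]
  have hlam_abs : ∀ s : ℤ, |lam s| = (2 * π / T) * |(s : ℝ)| := by
    intro s
    show |2 * π * (s : ℝ) / (T : ℝ)| = (2 * π / T) * |(s : ℝ)|
    rw [show 2 * π * (s : ℝ) / (T : ℝ) = (2 * π / T) * (s : ℝ) by ring, abs_mul,
      abs_of_pos (by positivity : (0:ℝ) < 2 * π / T)]
  have hsumbound : ∀ r : ℝ, Summable (fun s : ℤ => |(s : ℝ)| ^ r) →
      (∑ s ∈ F, |lam s| ^ r) ≤ (2 * π / T) ^ r * ∑' s : ℤ, |(s : ℝ)| ^ r := by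
    intro r hsum
    have h1 : (∑ s ∈ F, |lam s| ^ r) = (2 * π / T) ^ r * ∑ s ∈ F, |(s : ℝ)| ^ r := by
      rw [Finset.mul_sum]
      refine Finset.sum_congr rfl fun s _ => ?_
      rw [hlam_abs s, Real.mul_rpow (by positivity) (abs_nonneg _)]
    rw [h1]
    exact mul_le_mul_of_nonneg_left
      (Summable.sum_le_tsum F (fun i _ => Real.rpow_nonneg (abs_nonneg _) _) hsum)
      (Real.rpow_nonneg (by positivity) _)
  have hItotal : (∫ θ in (-π)..π, |θ| ^ q *
        ∑ s ∈ F, W ((θ - 2 * π * (s : ℝ) / (T : ℝ)) / B) * |2 * π * (s : ℝ) / (T : ℝ)| ^ (-p))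
      ≤ B * ((2 * π / T) ^ (q - p) * Z₁) + (B * (ρ * B) ^ q) * ((2 * π / T) ^ (-p) * Z₂) := by
    rw [hInt]
    calc (∑ s ∈ F, ∫ θ in (-π)..π, |θ| ^ q * (W ((θ - lam s) / B) * |lam s| ^ (-p)))
        ≤ ∑ s ∈ F, (B * |lam s| ^ (q - p) + (B * (ρ * B) ^ q) * |lam s| ^ (-p)) :=
          Finset.sum_le_sum hstepB
      _ = B * (∑ s ∈ F, |lam s| ^ (q - p)) + (B * (ρ * B) ^ q) * ∑ s ∈ F, |lam s| ^ (-p) := by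
          rw [Finset.sum_add_distrib, ← Finset.mul_sum, ← Finset.mul_sum]
      _ ≤ B * ((2 * π / T) ^ (q - p) * Z₁) + (B * (ρ * B) ^ q) * ((2 * π / T) ^ (-p) * Z₂) := by
          gcongr
          · exact hsumbound _ hsum1
          · exact hsumbound _ hsum2
  have hd1 : ((2 * π / (T:ℝ))) ^ (q - p) = (2 * π) ^ (q - p) * ((T:ℝ) ^ (p - q - 2) * (T:ℝ) ^ 2) := by
    rw [Real.div_rpow h2π.le hT0.le,
      show ((T:ℝ) ^ 2 : ℝ) = (T:ℝ) ^ ((2:ℕ):ℝ) from (Real.rpow_natCast _ 2).symm,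
      ← Real.rpow_add hT0, show p - q - 2 + ((2:ℕ):ℝ) = -(q - p) by push_cast; ring,
      Real.rpow_neg hT0.le, div_eq_mul_inv]
  have hd2 : ((2 * π / (T:ℝ))) ^ (-p) = (2 * π) ^ (-p) * ((T:ℝ) ^ (p - 2) * (T:ℝ) ^ 2) := by
    rw [Real.div_rpow h2π.le hT0.le,
      show ((T:ℝ) ^ 2 : ℝ) = (T:ℝ) ^ ((2:ℕ):ℝ) from (Real.rpow_natCast _ 2).symm,
      ← Real.rpow_add hT0, show p - 2 + ((2:ℕ):ℝ) = -(-p) by push_cast; ring,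
      Real.rpow_neg hT0.le, div_eq_mul_inv, neg_neg, inv_inv]
  have hρB : (ρ * B) ^ q = ρ ^ q * B ^ q := Real.mul_rpow hρ.le hB.le
  have hkey : (1 / (B * (T:ℝ) ^ 2)) *
        (B * ((2 * π / T) ^ (q - p) * Z₁) + (B * (ρ * B) ^ q) * ((2 * π / T) ^ (-p) * Z₂))
      = (2 * π) ^ (q - p) * Z₁ * (T:ℝ) ^ (p - q - 2)
        + ρ ^ q * (2 * π) ^ (-p) * Z₂ * (B ^ q * (T:ℝ) ^ (p - 2)) := by
    rw [hd1, hd2, hρB]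
    have hT2 : ((T:ℝ) ^ 2 : ℝ) ≠ 0 := by positivity
    field_simp
  have hfinal : (1 / (B * (T:ℝ) ^ 2)) *
        (∫ θ in (-π)..π, |θ| ^ q *
          ∑ s ∈ F, W ((θ - 2 * π * (s : ℝ) / (T : ℝ)) / B) * |2 * π * (s : ℝ) / (T : ℝ)| ^ (-p))
      ≤ (2 * π) ^ (q - p) * Z₁ * (T:ℝ) ^ (p - q - 2)
        + ρ ^ q * (2 * π) ^ (-p) * Z₂ * (B ^ q * (T:ℝ) ^ (p - 2)) := by
    rw [← hkey]
    exact mul_le_mul_of_nonneg_left hItotal (by positivity)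
  refine le_trans hfinal ?_
  have ha : 0 ≤ (2 * π) ^ (q - p) * Z₁ := by positivity
  have hb : 0 ≤ ρ ^ q * (2 * π) ^ (-p) * Z₂ := by positivity
  have hX : 0 ≤ (T:ℝ) ^ (p - q - 2) := by positivity
  have hY : 0 ≤ B ^ q * (T:ℝ) ^ (p - 2) := by positivity
  nlinarith [mul_nonneg ha hY, mul_nonneg hb hX]
end

section
/- Fix t ∈ (0, 1/2), α ∈ (0, 1], ρ > 0 and W_max > 0, and let W : ℝ → [0, W_max] satisfy W(x) = 0 for |x| > ρ and ∫_ℝ W(x) dx = 1. There exists a constant C = C(t, α, ρ, W_max) such that for every B with 0 < B ≤ 1: ∫_{−π}^{π} ∫_{−π}^{π} (1/B)·W((θ − λ)/B) · |θ|^{−2t} · |λ − θ|^{α} dλ dθ ≤ C·B^{α}. -/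
/-!
On the support of `λ ↦ W((θ - λ)/B)` one has `|λ - θ| ≤ ρB`, so the inner integral is at most
(width `2ρB`) × (height `W_max / B`) × `(ρB)^α`, uniformly in `θ`. What remains is
`∫_{-π}^{π} |θ|^{-2t} dθ`, which is finite because `-2t > -1`.
-/

open MeasureTheory Set
open scoped Real

lemma intervalIntegrable_abs_rpow {r : ℝ} (hr : -1 < r) (a b : ℝ) :
    IntervalIntegrable (fun x : ℝ => |x| ^ r) volume a b := by
  have to_nonneg : ∀ c, 0 ≤ c → IntervalIntegrable (fun x : ℝ => |x| ^ r) volume 0 c :=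
    fun c hc => (intervalIntegral.intervalIntegrable_rpow' hr).congr fun x hx => by
      rw [uIoc_of_le hc] at hx
      simp only [abs_of_pos hx.1]
  have to_any : ∀ c, IntervalIntegrable (fun x : ℝ => |x| ^ r) volume 0 c := by
    intro c
    rcases le_total 0 c with hc | hc
    · exact to_nonneg c hc
    · have := to_nonneg (-c) (by linarith)
      rw [IntervalIntegrable.iff_comp_neg] at this
      simpa only [neg_neg, neg_zero, abs_neg] using this
  exact (to_any a).symm.trans (to_any b)

lemma intervalIntegral.integral_mono_of_nonneg {μ : Measure ℝ} {f g : ℝ → ℝ} {a b : ℝ}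
    (hab : a ≤ b) (hf : ∀ x, 0 ≤ f x) (hg : IntervalIntegrable g μ a b) (hfg : ∀ x, f x ≤ g x) :
    ∫ x in a..b, f x ∂μ ≤ ∫ x in a..b, g x ∂μ := by
  simp only [intervalIntegral.integral_of_le hab]
  exact MeasureTheory.integral_mono_of_nonneg (ae_of_all _ hf) hg.1 (ae_of_all _ hfg)

section RescaledKernel

variable {W : ℝ → ℝ} {M ρ α B : ℝ}

lemma rescaled_kernel_mul_abs_rpow_le_indicator (hW : ∀ x, W x ∈ Icc 0 M)
    (hsupp : ∀ x, ρ < |x| → W x = 0) (hρ : 0 ≤ ρ) (hα : 0 ≤ α) (hB : 0 < B) (θ lam : ℝ) :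
    1 / B * W ((θ - lam) / B) * |lam - θ| ^ α ≤
      (Icc (θ - ρ * B) (θ + ρ * B)).indicator (fun _ => 1 / B * M * (ρ * B) ^ α) lam := by
  have hM : 0 ≤ M := (hW 0).1.trans (hW 0).2
  rcases le_or_gt |θ - lam| (ρ * B) with hnear | hfar
  · have hmem : lam ∈ Icc (θ - ρ * B) (θ + ρ * B) := by
      rw [abs_le] at hnear
      constructor <;> linarith
    rw [indicator_of_mem hmem]
    gcongr
    · exact (hW _).2
    · rwa [abs_sub_comm]
  · have hzero : W ((θ - lam) / B) = 0 :=
      hsupp _ (by rwa [abs_div, abs_of_pos hB, lt_div_iff₀ hB])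
    rw [hzero, mul_zero, zero_mul]
    exact indicator_nonneg (fun _ _ =>
      mul_nonneg (by positivity) (Real.rpow_nonneg (mul_nonneg hρ hB.le) _)) _

/-- `W` is not assumed measurable, so the integral is only bounded through an integrable
majorant, never computed by a change of variables. -/
lemma integral_rescaled_kernel_mul_abs_rpow_le (hW : ∀ x, W x ∈ Icc 0 M)
    (hsupp : ∀ x, ρ < |x| → W x = 0) (hρ : 0 ≤ ρ) (hα : 0 ≤ α) (hB : 0 < B)
    {a b : ℝ} (hab : a ≤ b) (θ : ℝ) :
    ∫ lam in a..b, 1 / B * W ((θ - lam) / B) * |lam - θ| ^ α ≤ 2 * ρ * M * (ρ * B) ^ α := by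
  have hM : 0 ≤ M := (hW 0).1.trans (hW 0).2
  set s := Icc (θ - ρ * B) (θ + ρ * B)
  set g := s.indicator fun _ => 1 / B * M * (ρ * B) ^ α
  have hg : Integrable g := (integrableOn_const measure_Icc_lt_top.ne).integrable_indicator
    measurableSet_Icc
  have hg_nonneg : ∀ x, 0 ≤ g x := indicator_nonneg fun _ _ =>
    mul_nonneg (by positivity) (Real.rpow_nonneg (mul_nonneg hρ hB.le) _)
  calc ∫ lam in a..b, 1 / B * W ((θ - lam) / B) * |lam - θ| ^ α
      ≤ ∫ lam in a..b, g lam :=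
        intervalIntegral.integral_mono_of_nonneg hab
          (fun lam => by have := (hW ((θ - lam) / B)).1; positivity) hg.intervalIntegrable
          (rescaled_kernel_mul_abs_rpow_le_indicator hW hsupp hρ hα hB θ)
    _ ≤ ∫ lam, g lam := by
        rw [intervalIntegral.integral_of_le hab]
        exact setIntegral_le_integral hg (ae_of_all _ hg_nonneg)
    _ = 2 * ρ * M * (ρ * B) ^ α := by
        rw [integral_indicator_const _ measurableSet_Icc, measureReal_def, Real.volume_Icc,
          ENNReal.toReal_ofReal (by nlinarith), smul_eq_mul]
        field_simp
        ring

end RescaledKernel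

theorem stmt_16_general
    (t α ρ Wmax : ℝ) (ht : t ∈ Set.Ioo (0 : ℝ) (1 / 2)) (hα : α ∈ Set.Ioc (0 : ℝ) 1)
    (hρ : 0 < ρ) :
    ∃ C : ℝ, ∀ W : ℝ → ℝ,
      (∀ x, W x ∈ Set.Icc (0 : ℝ) Wmax) → (∀ x, ρ < |x| → W x = 0) → (∫ x : ℝ, W x) = 1 →
      ∀ B : ℝ, 0 < B → B ≤ 1 →
        (∫ θ in (-π)..π, ∫ lam in (-π)..π,
            (1 / B) * W ((θ - lam) / B) * |θ| ^ (-2 * t) * |lam - θ| ^ α)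
          ≤ C * B ^ α := by
  have hpi : -π ≤ π := by linarith [Real.pi_pos]
  refine ⟨2 * ρ * Wmax * ρ ^ α * ∫ θ in (-π)..π, |θ| ^ (-2 * t), ?_⟩
  intro W hW hsupp _ B hB _
  have hsing := intervalIntegrable_abs_rpow (r := -2 * t) (by linarith [ht.2]) (-π) π
  have hinner := integral_rescaled_kernel_mul_abs_rpow_le hW hsupp hρ.le hα.1.le hB hpi
  calc (∫ θ in (-π)..π, ∫ lam in (-π)..π,
          (1 / B) * W ((θ - lam) / B) * |θ| ^ (-2 * t) * |lam - θ| ^ α)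
      = ∫ θ in (-π)..π, |θ| ^ (-2 * t) *
          ∫ lam in (-π)..π, 1 / B * W ((θ - lam) / B) * |lam - θ| ^ α := by
        refine intervalIntegral.integral_congr fun θ _ => ?_
        simp only [← intervalIntegral.integral_const_mul]
        congr 1 with lam
        ring
    _ ≤ ∫ θ in (-π)..π, |θ| ^ (-2 * t) * (2 * ρ * Wmax * (ρ * B) ^ α) :=
        intervalIntegral.integral_mono_of_nonneg hpi
          (fun θ => mul_nonneg (by positivity) <| intervalIntegral.integral_nonneg hpi
            fun lam _ => by have := (hW ((θ - lam) / B)).1; positivity)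
          (hsing.mul_const _) (fun θ => by gcongr; exact hinner θ)
    _ = _ := by
        rw [intervalIntegral.integral_mul_const, Real.mul_rpow hρ.le hB.le]
        ring

/-- Double-integral bound for the bandwidth-rescaled kernel against a power singularity and a
Hölder weight: `∫∫ (1/B)W((θ−λ)/B)|θ|^{−2t}|λ−θ|^α dλ dθ ≲ B^α`. -/
theorem stmt_16
    (t α ρ Wmax : ℝ) (ht : t ∈ Set.Ioo (0 : ℝ) (1 / 2)) (hα : α ∈ Set.Ioc (0 : ℝ) 1)
    (hρ : 0 < ρ) (hWmax : 0 < Wmax) :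
    ∃ C : ℝ, ∀ W : ℝ → ℝ,
      (∀ x, W x ∈ Set.Icc (0 : ℝ) Wmax) → (∀ x, ρ < |x| → W x = 0) → (∫ x : ℝ, W x) = 1 →
      ∀ B : ℝ, 0 < B → B ≤ 1 →
        (∫ θ in (-π)..π, ∫ lam in (-π)..π,
            (1 / B) * W ((θ - lam) / B) * |θ| ^ (-2 * t) * |lam - θ| ^ α)
          ≤ C * B ^ α :=
  stmt_16_general t α ρ Wmax ht hα hρ
end

section
/- Fix ρ > 0 and L > 0, and let W : ℝ → [0, ∞) be L-Lipschitz with W(x) = 0 for |x| > ρ. There exists a constant C = C(ρ, L) such that for every integer T ≥ 2 and every real B > 0 with BT ≥ 1, setting T₀ = ⌊(T−1)/2⌋, λ_s = 2πs/T and Π₁ = [−π, −λ₁) ∪ [λ₁, π): for every θ ∈ [−π, π], | (2π/(B·T)) · Σ_{s = −T₀, s ≠ 0}^{T₀} W((θ − λ_s)/B) − (1/B) · ∫_{Π₁} W((θ − λ)/B) dλ | ≤ C/(T·B). -/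
/-!
Split the nonzero frequencies into `s > 0` and `s < 0`; replacing `W` by `W ∘ Neg.neg` and `θ` by
`-θ` turns the negative half into the positive one. On the positive half the sum is a left-endpoint
Riemann sum, with mesh `h = 2π/T`, of `λ ↦ W((θ - λ)/B)`, which is `L/B`-Lipschitz and vanishes
outside an interval of length `2ρB`. Only the cells meeting the `h`-neighbourhood of that interval
contribute, each with error at most `(L/B) h²`, for a total of `(L/B) h (2ρB + 2h)`; the grid
overshoots `π` by less than one cell, which costs at most `h · sup |W| ≤ 3Lρh`. Dividing by `B` and
using `BT ≥ 1` gives `C/(TB)`.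
-/

open MeasureTheory Finset Set
open scoped Real NNReal

lemma sum_Icc_filter_ne_zero_eq_sum_range {M : Type*} [AddCommMonoid M] (F : ℤ → M) (n : ℕ) :
    ∑ s ∈ (Finset.Icc (-(n : ℤ)) n).filter (fun s : ℤ => s ≠ 0), F s =
      ∑ i ∈ range n, (F (i + 1) + F (-(i + 1))) := by
  induction n with
  | zero => simp [Finset.filter_singleton]
  | succ n ih =>
    have hIcc : (Finset.Icc (-((n + 1 : ℕ) : ℤ)) (n + 1 : ℕ)).filter (fun s : ℤ => s ≠ 0) =
        insert ((n : ℤ) + 1) (insert (-((n : ℤ) + 1))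
          ((Finset.Icc (-(n : ℤ)) n).filter (fun s : ℤ => s ≠ 0))) := by
      ext s
      simp only [Finset.mem_filter, Finset.mem_Icc, Finset.mem_insert]
      omega
    rw [hIcc, sum_insert (by simp; omega), sum_insert (by simp), ih, sum_range_succ]
    abel

lemma natCast_mul_two_pi_div_le_pi {m T : ℕ} (h : 2 * m ≤ T) : (m : ℝ) * (2 * π / T) ≤ π := by
  rcases Nat.eq_zero_or_pos T with rfl | hT
  · simp [Real.pi_nonneg]
  have h' : (2 * m : ℝ) ≤ T := by exact_mod_cast h
  rw [mul_div_assoc', div_le_iff₀ (by positivity)]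
  nlinarith [Real.pi_pos]

lemma pi_le_natCast_mul_two_pi_div {m T : ℕ} (hT : 0 < T) (h : T ≤ 2 * m) :
    π ≤ (m : ℝ) * (2 * π / T) := by
  have h' : (T : ℝ) ≤ 2 * m := by exact_mod_cast h
  rw [mul_div_assoc', le_div_iff₀ (by positivity)]
  nlinarith [Real.pi_pos]

lemma setIntegral_Ico_neg_union_Ico {f : ℝ → ℝ} (hf : Continuous f) {a b : ℝ} (ha : 0 ≤ a)
    (hab : a ≤ b) :
    ∫ x in Ico (-b) (-a) ∪ Ico a b, f x = (∫ x in Ico a b, f x) + ∫ x in Ico a b, f (-x) := by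
  have hIco : ∀ {u v : ℝ}, u ≤ v → ∀ g : ℝ → ℝ, ∫ x in Ico u v, g x = ∫ x in u..v, g x :=
    fun huv g => by rw [integral_Ico_eq_integral_Ioc, intervalIntegral.integral_of_le huv]
  have hdisj : Disjoint (Ico (-b) (-a)) (Ico a b) :=
    Set.disjoint_left.2 fun x hx hx' => by linarith [hx.2, hx'.1]
  rw [setIntegral_union hdisj measurableSet_Ico (hf.integrableOn_Icc.mono_set Ico_subset_Icc_self)
      (hf.integrableOn_Icc.mono_set Ico_subset_Icc_self), hIco hab (fun x => f (-x)),
    intervalIntegral.integral_comp_neg, ← hIco (neg_le_neg hab), add_comm]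

lemma abs_sub_le_indicator_of_lipschitzWith {f : ℝ → ℝ} {K : ℝ≥0} {c d h p x : ℝ}
    (hf : LipschitzWith K f) (hsupp : ∀ y ∉ Icc c d, f y = 0) (hpx : p ≤ x) (hxp : x ≤ p + h) :
    |f p - f x| ≤ (Icc (c - h) (d + h)).indicator (fun _ => K * h) x := by
  by_cases hx : x ∈ Icc (c - h) (d + h)
  · rw [Set.indicator_of_mem hx]
    calc |f p - f x| ≤ K * |p - x| := by simpa [Real.dist_eq] using hf.dist_le_mul p x
      _ ≤ K * h := by
        gcongr
        rw [abs_sub_comm, abs_of_nonneg (by linarith)]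
        linarith
  · rw [Set.indicator_of_notMem hx]
    simp only [Set.mem_Icc, not_and_or, not_le] at hx
    rw [hsupp p, hsupp x, sub_zero, abs_zero] <;>
      simp only [Set.mem_Icc, not_and_or, not_le] <;> rcases hx with hx | hx <;>
      first | (left; linarith) | (right; linarith)

lemma abs_riemannSum_sub_intervalIntegral_le {f : ℝ → ℝ} {K : ℝ≥0} {c d a h : ℝ}
    (hf : LipschitzWith K f) (hsupp : ∀ y ∉ Icc c d, f y = 0) (hcd : c ≤ d) (hh : 0 ≤ h)
    (n : ℕ) :
    |∑ i ∈ range n, h * f (a + i * h) - ∫ x in a..a + n * h, f x| ≤ K * h * (d - c + 2 * h) := by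
  set g := (Icc (c - h) (d + h)).indicator (fun _ => (K * h : ℝ))
  have hg : Integrable g := (integrable_indicator_iff measurableSet_Icc).2 (integrableOn_const
    (by rw [Real.volume_Icc]; exact ENNReal.ofReal_ne_top) enorm_ne_top)
  have hg0 : 0 ≤ g := Set.indicator_nonneg fun _ _ => by positivity
  have hfi : ∀ u v, IntervalIntegrable f volume u v := hf.continuous.intervalIntegrable
  have hcell : ∀ i : ℕ, |h * f (a + i * h) - ∫ x in a + i * h..a + (i + 1 : ℕ) * h, f x| ≤
      ∫ x in a + i * h..a + (i + 1 : ℕ) * h, g x := by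
    intro i
    set p := a + i * h
    have hp : a + (i + 1 : ℕ) * h = p + h := by push_cast; ring
    rw [hp]
    calc |h * f p - ∫ x in p..p + h, f x| = |∫ x in p..p + h, (f p - f x)| := by
          rw [intervalIntegral.integral_sub intervalIntegrable_const (hfi _ _),
            intervalIntegral.integral_const, smul_eq_mul, add_sub_cancel_left]
      _ ≤ ∫ x in p..p + h, |f p - f x| :=
          intervalIntegral.abs_integral_le_integral_abs (by linarith)
      _ ≤ ∫ x in p..p + h, g x :=
          intervalIntegral.integral_mono_on (by linarith)
            ((continuous_const.sub hf.continuous).abs.intervalIntegrable _ _)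
            hg.intervalIntegrable fun x hx =>
              abs_sub_le_indicator_of_lipschitzWith hf hsupp hx.1 hx.2
  have hsum : ∀ φ : ℝ → ℝ, (∀ u v, IntervalIntegrable φ volume u v) →
      ∑ i ∈ range n, ∫ x in a + i * h..a + (i + 1 : ℕ) * h, φ x = ∫ x in a..a + n * h, φ x :=
    fun φ hφ => by
      simpa using intervalIntegral.sum_integral_adjacent_intervals (a := fun i : ℕ => a + i * h)
        (f := φ) (n := n) fun _ _ => hφ _ _
  calc |∑ i ∈ range n, h * f (a + i * h) - ∫ x in a..a + n * h, f x|
      = |∑ i ∈ range n, (h * f (a + i * h) - ∫ x in a + i * h..a + (i + 1 : ℕ) * h, f x)| := by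
        rw [sum_sub_distrib, hsum f hfi]
    _ ≤ ∑ i ∈ range n, ∫ x in a + i * h..a + (i + 1 : ℕ) * h, g x :=
        (abs_sum_le_sum_abs _ _).trans (sum_le_sum fun i _ => hcell i)
    _ = ∫ x in a..a + n * h, g x := hsum g fun _ _ => hg.intervalIntegrable
    _ ≤ ∫ x, g x := by
        rw [intervalIntegral.integral_of_le (by nlinarith [n.cast_nonneg (α := ℝ)])]
        exact setIntegral_le_integral hg (Filter.Eventually.of_forall hg0)
    _ = K * h * (d - c + 2 * h) := by
        rw [integral_indicator_const _ measurableSet_Icc, Real.volume_real_Icc,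
          max_eq_left (by linarith), smul_eq_mul]
        ring

lemma abs_riemannSum_sub_setIntegral_Ico_le {f : ℝ → ℝ} {K : ℝ≥0} {c d a b h M : ℝ}
    (hf : LipschitzWith K f) (hsupp : ∀ y ∉ Icc c d, f y = 0) (hcd : c ≤ d) (hh : 0 ≤ h)
    (hM : ∀ x, |f x| ≤ M) {n : ℕ} (hab : a ≤ b) (hbn : b ≤ a + n * h) (hnb : a + n * h ≤ b + h) :
    |∑ i ∈ range n, h * f (a + i * h) - ∫ x in Ico a b, f x| ≤
      K * h * (d - c + 2 * h) + M * h := by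
  have hfi : ∀ u v, IntervalIntegrable f volume u v := hf.continuous.intervalIntegrable
  have htail : |∫ x in b..a + n * h, f x| ≤ M * h := by
    refine (intervalIntegral.norm_integral_le_of_norm_le_const
      fun x _ => (Real.norm_eq_abs _).trans_le (hM x)).trans ?_
    rw [abs_of_nonneg (by linarith)]
    exact mul_le_mul_of_nonneg_left (by linarith) ((abs_nonneg _).trans (hM 0))
  rw [integral_Ico_eq_integral_Ioc, ← intervalIntegral.integral_of_le hab]
  calc _ = |(∑ i ∈ range n, h * f (a + i * h) - ∫ x in a..a + n * h, f x) +
        ∫ x in b..a + n * h, f x| := by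
        rw [← intervalIntegral.integral_add_adjacent_intervals (hfi a b) (hfi b (a + n * h))]
        congr 1
        ring
    _ ≤ _ := (abs_add_le _ _).trans
        (add_le_add (abs_riemannSum_sub_intervalIntegral_le hf hsupp hcd hh n) htail)

lemma LipschitzWith.abs_le_three_mul {W : ℝ → ℝ} {K : ℝ≥0} {ρ : ℝ} (hW : LipschitzWith K W)
    (hsupp : ∀ x, ρ < |x| → W x = 0) (hρ : 0 < ρ) (x : ℝ) : |W x| ≤ 3 * K * ρ := by
  rcases lt_or_ge ρ |x| with hx | hx
  · rw [hsupp x hx, abs_zero]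
    positivity
  have h2ρ : ρ < |2 * ρ| := by rw [abs_of_pos (by linarith)]; linarith
  calc |W x| = dist (W x) (W (2 * ρ)) := by rw [hsupp _ h2ρ, Real.dist_eq, sub_zero]
    _ ≤ K * |x - 2 * ρ| := hW.dist_le_mul _ _
    _ ≤ K * (3 * ρ) := by gcongr; rw [abs_le] at hx ⊢; constructor <;> linarith
    _ = 3 * K * ρ := by ring

lemma LipschitzWith.comp_const_sub_div {W : ℝ → ℝ} {K : ℝ≥0} (hW : LipschitzWith K W) {B : ℝ}
    (hB : 0 < B) (θ : ℝ) :
    LipschitzWith (K / B.toNNReal) fun lam => W ((θ - lam) / B) := by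
  refine LipschitzWith.of_dist_le_mul fun x y => (hW.dist_le_mul _ _).trans_eq ?_
  rw [NNReal.coe_div, Real.coe_toNNReal _ hB.le, Real.dist_eq, Real.dist_eq, ← sub_div,
    abs_div, abs_of_pos hB, show θ - x - (θ - y) = -(x - y) by ring, abs_neg]
  ring

lemma apply_sub_div_eq_zero_of_notMem_Icc {W : ℝ → ℝ} {ρ B θ : ℝ} (hsupp : ∀ x, ρ < |x| → W x = 0)
    (hB : 0 < B) (lam : ℝ) (hlam : lam ∉ Icc (θ - ρ * B) (θ + ρ * B)) : W ((θ - lam) / B) = 0 := by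
  apply hsupp
  rw [abs_div, abs_of_pos hB, lt_div_iff₀ hB, lt_abs]
  rw [Set.mem_Icc, not_and_or, not_le, not_le] at hlam
  rcases hlam with h | h
  · left; linarith
  · right; linarith

lemma abs_kernelSum_sub_integral_le {W : ℝ → ℝ} {K : ℝ≥0} {ρ M B h b : ℝ}
    (hW : LipschitzWith K W) (hsupp : ∀ x, ρ < |x| → W x = 0) (hM : ∀ x, |W x| ≤ M)
    (hρ : 0 ≤ ρ) (hB : 0 < B) (hh : 0 ≤ h) {n : ℕ} (hhb : h ≤ b) (hnb : n * h ≤ b)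
    (hbn : b ≤ (n + 1) * h) (θ : ℝ) :
    |h * ∑ i ∈ range n, W ((θ - (i + 1) * h) / B) - ∫ lam in Ico h b, W ((θ - lam) / B)| ≤
      K / B * h * (2 * ρ * B + 2 * h) + M * h := by
  have := abs_riemannSum_sub_setIntegral_Ico_le (hW.comp_const_sub_div hB θ)
    (apply_sub_div_eq_zero_of_notMem_Icc hsupp hB) (by nlinarith) hh (fun _ => hM _)
    (n := n) hhb (by linarith) (by linarith)
  rw [NNReal.coe_div, Real.coe_toNNReal _ hB.le] at this
  convert this using 3
  · rw [mul_sum]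
    refine sum_congr rfl fun i _ => ?_
    ring_nf
  · ring

lemma abs_symmKernelSum_sub_integral_le {W : ℝ → ℝ} {K : ℝ≥0} {ρ M B h b : ℝ}
    (hW : LipschitzWith K W) (hsupp : ∀ x, ρ < |x| → W x = 0) (hM : ∀ x, |W x| ≤ M)
    (hρ : 0 ≤ ρ) (hB : 0 < B) (hh : 0 ≤ h) {n : ℕ} (hhb : h ≤ b) (hnb : n * h ≤ b)
    (hbn : b ≤ (n + 1) * h) (θ : ℝ) :
    |h * ∑ i ∈ range n, (W ((θ - (i + 1) * h) / B) + W ((θ + (i + 1) * h) / B)) -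
        ∫ lam in Ico (-b) (-h) ∪ Ico h b, W ((θ - lam) / B)| ≤
      2 * (K / B * h * (2 * ρ * B + 2 * h) + M * h) := by
  have hWneg : LipschitzWith K fun x => W (-x) :=
    LipschitzWith.of_dist_le_mul fun x y => (hW.dist_le_mul _ _).trans_eq (by rw [dist_neg_neg])
  have hneg := abs_kernelSum_sub_integral_le hWneg (fun x hx => hsupp (-x) (by rwa [abs_neg]))
    (fun _ => hM _) hρ hB hh hhb hnb hbn (-θ)
  have hpos := abs_kernelSum_sub_integral_le hW hsupp hM hρ hB hh hhb hnb hbn θ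
  have hcont : Continuous fun lam => W ((θ - lam) / B) := (hW.comp_const_sub_div hB θ).continuous
  simp only [show ∀ x : ℝ, -((-θ - x) / B) = (θ + x) / B by intro x; ring] at hneg
  rw [setIntegral_Ico_neg_union_Ico hcont hh hhb, sum_add_distrib, mul_add]
  simp only [sub_neg_eq_add]
  calc _ = |(h * ∑ i ∈ range n, W ((θ - (i + 1) * h) / B) - ∫ lam in Ico h b, W ((θ - lam) / B)) +
        (h * ∑ i ∈ range n, W ((θ + (i + 1) * h) / B) - ∫ lam in Ico h b, W ((θ + lam) / B))| := by
        congr 1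
        ring
    _ ≤ _ := (abs_add_le _ _).trans (by linarith)

/-- Riemann-sum discretization error, uniform in the target frequency `θ`: the kernel sum over
the nonzero Fourier frequencies differs from the corresponding integral over
`Π₁ = [−π, −λ₁) ∪ [λ₁, π)` by at most `C/(TB)`. -/
theorem stmt_17
    (ρ L : ℝ) (hρ : 0 < ρ) (hL : 0 < L) :
    ∃ C : ℝ, ∀ W : ℝ → ℝ,
      (∀ x, 0 ≤ W x) → (∀ x y, |W x - W y| ≤ L * |x - y|) → (∀ x, ρ < |x| → W x = 0) →
      ∀ T : ℕ, 2 ≤ T → ∀ B : ℝ, 0 < B → 1 ≤ B * T → ∀ θ ∈ Set.Icc (-π) π,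
        let T₀ : ℤ := (((T - 1) / 2 : ℕ) : ℤ)
        |(2 * π / (B * T)) *
              ∑ s ∈ (Finset.Icc (-T₀) T₀).filter (fun s : ℤ => s ≠ 0),
                W ((θ - 2 * π * (s : ℝ) / (T : ℝ)) / B) -
            (1 / B) *
              ∫ lam in Set.Ico (-π) (-(2 * π / (T : ℝ))) ∪ Set.Ico (2 * π / (T : ℝ)) π,
                W ((θ - lam) / B)|
          ≤ C / (T * B) := by
  refine ⟨20 * π * L * ρ + 16 * π ^ 2 * L, ?_⟩
  intro W _ hlip hsupp T hT B hB hBT θ _ T₀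
  have hW : LipschitzWith L.toNNReal W := LipschitzWith.of_dist_le_mul fun x y => by
    simpa [Real.dist_eq, Real.coe_toNNReal L hL.le] using hlip x y
  set h := 2 * π / T with hh
  set n := (T - 1) / 2
  have hbound := abs_symmKernelSum_sub_integral_le hW hsupp
    (hW.abs_le_three_mul hsupp hρ) hρ.le hB (by positivity) (n := n)
    (by simpa using natCast_mul_two_pi_div_le_pi (m := 1) hT)
    (natCast_mul_two_pi_div_le_pi (by omega))
    (by exact_mod_cast pi_le_natCast_mul_two_pi_div (m := n + 1) (by omega) (by omega)) θ
  rw [Real.coe_toNNReal L hL.le] at hbound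
  have hsum : ∑ s ∈ (Finset.Icc (-T₀) T₀).filter (fun s : ℤ => s ≠ 0),
      W ((θ - 2 * π * (s : ℝ) / T) / B) =
        ∑ i ∈ range n, (W ((θ - (i + 1) * h) / B) + W ((θ + (i + 1) * h) / B)) := by
    rw [sum_Icc_filter_ne_zero_eq_sum_range]
    refine sum_congr rfl fun i _ => ?_
    push_cast
    congr 3 <;> ring
  calc _ = 1 / B * |h * ∑ i ∈ range n, (W ((θ - (i + 1) * h) / B) + W ((θ + (i + 1) * h) / B)) -
        ∫ lam in Set.Ico (-π) (-h) ∪ Set.Ico h π, W ((θ - lam) / B)| := by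
        rw [hsum, show 2 * π / (B * T) = 1 / B * h by ring, mul_assoc, ← mul_sub, abs_mul,
          abs_of_pos (one_div_pos.2 hB)]
    _ ≤ 1 / B * (2 * (L / B * h * (2 * ρ * B + 2 * h) + 3 * L * ρ * h)) := by gcongr
    _ = 4 * π / (T * B) * (5 * L * ρ + 4 * π * L / (T * B)) := by
        rw [hh]
        field_simp
        ring
    _ ≤ 4 * π / (T * B) * (5 * L * ρ + 4 * π * L) := by
        gcongr
        exact div_le_self (by positivity) (by linarith)
    _ = (20 * π * L * ρ + 16 * π ^ 2 * L) / (T * B) := by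
        field_simp
        ring
end
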